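/- arXiv:2110.10535 — 9 statements merged into one kernel-verified Lean document; each statement's English description precedes it below -/
import Mathlib

section
/- Let s be a state of a CEST-system TS. If s⊕α is defined (i.e., s –α→) and β+γ ≤ α as multisets, then s⊕β, s⊕(β+γ) and (s⊕β)⊕γ are also defined, and (s⊕β)⊕γ = s⊕(β+γ). -/
/-! Common formalization of step transition systems, CEST-systems,
reversing constructions, PT-nets, and solvability. -/

structure STS (S : Type*) (A : Type*) where
  T : Finset A
  tr : S → Multiset A → S → Prop
  init : S

namespace STS

variable {S S' : Type*} {A : Type*}

/-- All transition labels are multisets over the action set `T`. -/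
def LabelsIn (X : STS S A) : Prop :=
  ∀ s (α : Multiset A) s', X.tr s α s' → ∀ a ∈ α, a ∈ X.T

/-- The integer action vector of a step. -/
def stepVec [DecidableEq A] (α : Multiset A) : A → ℤ :=
  fun a => (α.count a : ℤ)

/-- `PathSig X s r v` holds iff there is an undirected path from `s` to `r`
with signature `v`. -/
inductive PathSig [DecidableEq A] (X : STS S A) : S → S → (A → ℤ) → Prop
  | nil (s : S) : PathSig X s s 0
  | fwd {s r r' : S} {α : Multiset A} {v : A → ℤ} :
      PathSig X s r v → X.tr r α r' → PathSig X s r' (v + stepVec α)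
  | bwd {s r r' : S} {α : Multiset A} {v : A → ℤ} :
      PathSig X s r v → X.tr r' α r → PathSig X s r' (v - stepVec α)

/-- The least addition-closed equivalence relating signatures of any two
undirected paths with the same source and target. -/
inductive Bowtie [DecidableEq A] (X : STS S A) : (A → ℤ) → (A → ℤ) → Prop
  | base {s r : S} {v w : A → ℤ} :
      PathSig X s r v → PathSig X s r w → Bowtie X v w
  | refl (v : A → ℤ) : Bowtie X v v
  | symm {v w : A → ℤ} : Bowtie X v w → Bowtie X w v
  | trans {u v w : A → ℤ} : Bowtie X u v → Bowtie X v w → Bowtie X u w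
  | add {v w v' w' : A → ℤ} :
      Bowtie X v w → Bowtie X v' w' → Bowtie X (v + v') (w + w')

/-- Constant effect. -/
def CE [DecidableEq A] (X : STS S A) : Prop :=
  ∀ (s r r' : S) (v w : A → ℤ),
    PathSig X s r v → PathSig X s r' w → Bowtie X v w → r = r'

/-- Reachability by forward transitions. -/
inductive ReachFrom (X : STS S A) : S → S → Prop
  | refl (s : S) : ReachFrom X s s
  | step {s r r' : S} {α : Multiset A} :
      ReachFrom X s r → X.tr r α r' → ReachFrom X s r'

/-- Every state is reachable from the initial state. -/
def REA (X : STS S A) : Prop := ∀ s, X.ReachFrom X.init s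

/-- Empty loops. -/
def EL (X : STS S A) : Prop := ∀ s, X.tr s 0 s

/-- Sequentialisability. -/
def SEQ (X : STS S A) : Prop :=
  ∀ (s : S) (α β : Multiset A), (∃ s', X.tr s (α + β) s') →
    ∃ s', X.tr s α s' ∧ ∃ s'', X.tr s' β s''

/-- A CEST-system: a step transition system satisfying CE, REA, EL and SEQ. -/
def IsCEST [DecidableEq A] (X : STS S A) : Prop :=
  X.LabelsIn ∧ X.CE ∧ X.REA ∧ X.EL ∧ X.SEQ

/-- Step-finiteness: at every state only finitely many steps are enabled. -/
def StepFinite (X : STS S A) : Prop :=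
  ∀ s, {α : Multiset A | ∃ s', X.tr s α s'}.Finite

/-- Retain only transitions whose label has size at most 1. -/
def seqR (X : STS S A) : STS S A :=
  { X with tr := fun s α s' => X.tr s α s' ∧ Multiset.card α ≤ 1 }

/-- Retain only transitions whose label is a set. -/
def setR (X : STS S A) : STS S A :=
  { X with tr := fun s α s' => X.tr s α s' ∧ α.Nodup }

/-- Retain only transitions whose label has support of size at most 1. -/
def spikeR [DecidableEq A] (X : STS S A) : STS S A :=
  { X with tr := fun s α s' => X.tr s α s' ∧ α.toFinset.card ≤ 1 }

variable [DecidableEq A]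

/-- `bar` is a proper reversing map for the actions of `X`: reverses are
pairwise distinct and fresh. -/
def GoodRev (X : STS S A) (bar : A → A) : Prop :=
  Set.InjOn bar ↑X.T ∧ ∀ a ∈ X.T, bar a ∉ X.T

/-- The action set `T ⊎ T̄`. -/
def revT (X : STS S A) (bar : A → A) : Finset A := X.T ∪ X.T.image bar

/-- The direct reverse `TS^rev` (in a CEST-system, `s –α→ s'` means `s' = s⊕α`). -/
def revSTS (X : STS S A) (bar : A → A) : STS S A where
  T := revT X bar
  tr s γ s' := X.tr s γ s' ∨ ∃ α : Multiset A, γ = Multiset.map bar α ∧ X.tr s' α s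
  init := X.init

/-- The set reverse `TS^setrev`. -/
def setrevSTS (X : STS S A) (bar : A → A) : STS S A where
  T := revT X bar
  tr s γ s' := X.tr s γ s' ∨
    ∃ α : Multiset A, γ = Multiset.map bar α ∧ α.Nodup ∧ X.tr s' α s
  init := X.init

/-- The mixed reverse `TS^mixrev`: transitions `(s⊕α, ᾱ+β, s⊕β)` for `s –(α+β)→`. -/
def mixrevSTS (X : STS S A) (bar : A → A) : STS S A where
  T := revT X bar
  tr u γ v := ∃ (s : S) (α β : Multiset A),
      γ = Multiset.map bar α + β ∧ (∃ w, X.tr s (α + β) w) ∧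
      X.tr s α u ∧ X.tr s β v
  init := X.init

/-- `Y` is a split reverse of `X` (w.r.t. reversing map `bar` and the
index-removing map `noidx`). -/
def IsSplitRev (X : STS S A) (bar noidx : A → A) (Y : STS S A) : Prop :=
  Y.init = X.init ∧
  Y.LabelsIn ∧
  X.T ⊆ Y.T ∧
  (∀ a ∈ X.T, noidx a = a) ∧
  Disjoint X.T ((Y.T \ X.T).image noidx) ∧
  Y.SEQ ∧
  Y.T.image noidx = revT X bar ∧
  ∀ (s : S) (γ : Multiset A) (s' : S),
    (∃ δ : Multiset A, Y.tr s δ s' ∧ γ = Multiset.map noidx δ) ↔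
      (revSTS X bar).tr s γ s'

/-- Inclusion with the identity map on states (`⊴`). -/
def SubId (X Y : STS S A) : Prop :=
  X.init = Y.init ∧ X.T ⊆ Y.T ∧
  ∀ s (α : Multiset A) s', X.tr s α s' → Y.tr s α s'

/-- Inclusion (`◁`) via a bijection of states. -/
def Incl (X : STS S A) (Y : STS S' A) : Prop :=
  ∃ ψ : S ≃ S', ψ X.init = Y.init ∧ X.T ⊆ Y.T ∧
    ∀ s (α : Multiset A) s', X.tr s α s' → Y.tr (ψ s) α (ψ s')

/-- Isomorphism of step transition systems. -/
def IsoSTS (X : STS S A) (Y : STS S' A) : Prop :=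
  ∃ ψ : S ≃ S', ψ X.init = Y.init ∧ X.T = Y.T ∧
    ∀ s (α : Multiset A) s', X.tr s α s' ↔ Y.tr (ψ s) α (ψ s')

/-- `TS̄_r`: the reversed system restricted to the states from which `r` is
reachable in `X`, with initial state `r`. -/
def revRestrict (X : STS S A) (bar : A → A) (r : S) :
    STS {s : S // X.ReachFrom s r} A where
  T := X.T.image bar
  tr u γ v := ∃ α : Multiset A, γ = Multiset.map bar α ∧ X.tr v.1 α u.1
  init := ⟨r, ReachFrom.refl r⟩

end STS

/-- A place/transition net. -/
structure PTNet (P : Type*) (A : Type*) where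
  T : Finset A
  pre : P → A → ℕ
  post : A → P → ℕ
  M0 : P → ℕ
  pre_pos : ∀ a ∈ T, ∃ p, 0 < pre p a

namespace PTNet

variable {P A : Type*}

def PRE (N : PTNet P A) (α : Multiset A) (p : P) : ℕ :=
  (α.map fun a => N.pre p a).sum

def POST (N : PTNet P A) (α : Multiset A) (p : P) : ℕ :=
  (α.map fun a => N.post a p).sum

def Enabled (N : PTNet P A) (M : P → ℕ) (α : Multiset A) : Prop :=
  (∀ a ∈ α, a ∈ N.T) ∧ ∀ p, N.PRE α p ≤ M p

def fire (N : PTNet P A) (M : P → ℕ) (α : Multiset A) : P → ℕ :=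
  fun p => M p - N.PRE α p + N.POST α p

inductive Reach (N : PTNet P A) : (P → ℕ) → Prop
  | init : Reach N N.M0
  | step {M : P → ℕ} {α : Multiset A} :
      Reach N M → N.Enabled M α → Reach N (N.fire M α)

/-- The subnet induced by a set of actions (same places, same marking). -/
def restrict [DecidableEq A] (N : PTNet P A) (T' : Finset A) : PTNet P A where
  T := N.T ∩ T'
  pre := N.pre
  post := N.post
  M0 := N.M0
  pre_pos := fun a ha => N.pre_pos a (Finset.mem_of_mem_inter_left ha)

end PTNet

/-- The concurrent reachability graph of a PT-net. -/
def CRG {P A : Type*} (N : PTNet P A) : STS {M : P → ℕ // N.Reach M} A where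
  T := N.T
  tr M α M' := N.Enabled M.1 α ∧ M'.1 = N.fire M.1 α
  init := ⟨N.M0, PTNet.Reach.init⟩

/-- A step transition system is solvable if it is isomorphic to the
concurrent reachability graph of some PT-net. -/
def STSSolvable {S A : Type*} (X : STS S A) : Prop :=
  ∃ (n : ℕ) (N : PTNet (Fin n) A), STS.IsoSTS X (CRG N)

/-- An unmarked PT-net. -/
structure UPTNet (P : Type*) (A : Type*) where
  T : Finset A
  pre : P → A → ℕ
  post : A → P → ℕ
  pre_pos : ∀ a ∈ T, ∃ p, 0 < pre p a

def UPTNet.withM {P A : Type*} (U : UPTNet P A) (M : P → ℕ) : PTNet P A :=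
  ⟨U.T, U.pre, U.post, M, U.pre_pos⟩

/-- Solvability of the reversed system `TS̄` with multiple initial states `R`:
one unmarked PT-net and one map `ψ` solving each `TS̄_r` via `ψ(r)` as the
initial marking. -/
def RevMultiSolvable {S A : Type*} [DecidableEq A] (X : STS S A) (bar : A → A)
    (R : Set S) : Prop :=
  ∃ (n : ℕ) (U : UPTNet (Fin n) A) (ψ : S → Fin n → ℕ),
    ∀ r ∈ R,
      ∃ e : {s : S // X.ReachFrom s r} ≃
              {M : Fin n → ℕ // (U.withM (ψ r)).Reach M},
        (∀ s, (e s).1 = ψ s.1) ∧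
        (X.revRestrict bar r).T = (CRG (U.withM (ψ r))).T ∧
        ∀ s (α : Multiset A) s',
          (X.revRestrict bar r).tr s α s' ↔ (CRG (U.withM (ψ r))).tr (e s) α (e s')

/-- A PT-net with weighted read arcs. -/
structure PTRNet (P : Type*) (A : Type*) where
  T : Finset A
  pre : P → A → ℕ
  post : A → P → ℕ
  read : P → A → Option ℕ
  M0 : P → ℕ
  pre_pos : ∀ a ∈ T, ∃ p, 0 < pre p a

namespace PTRNet

variable {P A : Type*}

def toPTNet (N : PTRNet P A) : PTNet P A := ⟨N.T, N.pre, N.post, N.M0, N.pre_pos⟩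

def Enabled (N : PTRNet P A) (M : P → ℕ) (α : Multiset A) : Prop :=
  N.toPTNet.Enabled M α ∧ ∀ a ∈ α, ∀ p k, N.read p a = some k → M p = k

inductive Reach (N : PTRNet P A) : (P → ℕ) → Prop
  | init : Reach N N.M0
  | step {M : P → ℕ} {α : Multiset A} :
      Reach N M → N.Enabled M α → Reach N (N.toPTNet.fire M α)

end PTRNet

/-- The concurrent reachability graph of a PTR-net. -/
def PTRCRG {P A : Type*} (N : PTRNet P A) : STS {M : P → ℕ // N.Reach M} A where
  T := N.T
  tr M α M' := N.Enabled M.1 α ∧ M'.1 = N.toPTNet.fire M.1 α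
  init := ⟨N.M0, PTRNet.Reach.init⟩

/-- If `s⊕α` is defined and `β+γ ≤ α`, then `s⊕β`, `s⊕(β+γ)` and `(s⊕β)⊕γ`
are defined and `(s⊕β)⊕γ = s⊕(β+γ)`. -/
theorem stmt1 {S A : Type*} [DecidableEq A] (X : STS S A) (h : X.IsCEST)
    (s t : S) (α β γ : Multiset A) (hst : X.tr s α t) (hle : β + γ ≤ α) :
    ∃ u w : S, X.tr s β u ∧ X.tr u γ w ∧ X.tr s (β + γ) w := by
  obtain ⟨-, hCE, -, -, hSEQ⟩ := h
  have hα : (β + γ) + (α - (β + γ)) = α := add_tsub_cancel_of_le hle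
  obtain ⟨w', hw', -⟩ := hSEQ s (β + γ) (α - (β + γ)) ⟨t, by rwa [hα]⟩
  obtain ⟨u, hu, w, hw⟩ := hSEQ s β γ ⟨w', hw'⟩
  have p1 : X.PathSig s w' (0 + STS.stepVec (β + γ)) :=
    STS.PathSig.fwd (STS.PathSig.nil s) hw'
  have p2 : X.PathSig s w (0 + STS.stepVec β + STS.stepVec γ) :=
    STS.PathSig.fwd (STS.PathSig.fwd (STS.PathSig.nil s) hu) hw
  have hv : (0 + STS.stepVec (β + γ) : A → ℤ) = 0 + STS.stepVec β + STS.stepVec γ := by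
    funext a
    simp [STS.stepVec, Multiset.count_add]
  have : w' = w := hCE s w' w _ _ p1 p2 (hv ▸ STS.Bowtie.refl _)
  exact ⟨u, w, hu, hw, this ▸ hw'⟩
end

section
/- Let TS=(S,T,→,s₀) be a sequential step transition system satisfying CE, let a ∈ T, let ā ∉ T be a fresh action, and let →' be any subset of {(r,ā,s) : (s,a,r) ∈ →}. Then the step transition system TS'=(S, T∪{ā}, →∪→', s₀) satisfies CE. -/
section Aux

variable {S A : Type*} [DecidableEq A]

/-- Substitution `ā ↦ -a` on action vectors. -/
def phiRev (a ab : A) (v : A → ℤ) : A → ℤ :=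
  fun x => if x = ab then 0 else if x = a then v a - v ab else v x

lemma phiRev_add (a ab : A) (v w : A → ℤ) :
    phiRev a ab (v + w) = phiRev a ab v + phiRev a ab w := by
  funext x; simp only [phiRev, Pi.add_apply]
  split_ifs <;> ring

lemma phiRev_sub (a ab : A) (v w : A → ℤ) :
    phiRev a ab (v - w) = phiRev a ab v - phiRev a ab w := by
  funext x; simp only [phiRev, Pi.sub_apply]
  split_ifs <;> ring

lemma phiRev_zero (a ab : A) : phiRev a ab (0 : A → ℤ) = 0 := by
  funext x; simp [phiRev]

lemma phiRev_stepVec_of_not_mem (a ab : A) (α : Multiset A) (h : ab ∉ α) :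
    phiRev a ab (STS.stepVec α) = STS.stepVec α := by
  have hc : α.count ab = 0 := Multiset.count_eq_zero.mpr h
  funext x
  simp only [phiRev, STS.stepVec]
  split_ifs with h1 h2
  · subst h1; simp [hc]
  · subst h2; simp [hc]
  · rfl

lemma phiRev_stepVec_singleton (a ab : A) (hne : a ≠ ab) :
    phiRev a ab (STS.stepVec ({ab} : Multiset A)) = -STS.stepVec ({a} : Multiset A) := by
  funext x
  simp only [phiRev, STS.stepVec, Multiset.count_singleton, Pi.neg_apply]
  split_ifs with h1 h2 <;> simp_all

end Aux

/-- Adding reverses of some transitions labelled by the same action to a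
sequential step transition system preserves CE. -/
theorem stmt3 {S A : Type*} [DecidableEq A] (X : STS S A) (hLab : X.LabelsIn)
    (hseq : ∀ s (α : Multiset A) s', X.tr s α s' → Multiset.card α ≤ 1)
    (hCE : X.CE) (a : A) (ha : a ∈ X.T) (ab : A) (hab : ab ∉ X.T)
    (tr' : S → Multiset A → S → Prop)
    (htr' : ∀ r (β : Multiset A) s, tr' r β s → β = {ab} ∧ X.tr s {a} r) :
    STS.CE (⟨insert ab X.T, fun s α s' => X.tr s α s' ∨ tr' s α s', X.init⟩ :
      STS S A) := by
  set Y : STS S A :=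
    ⟨insert ab X.T, fun s α s' => X.tr s α s' ∨ tr' s α s', X.init⟩ with hY
  have hne : a ≠ ab := fun h => hab (h ▸ ha)
  -- path transfer
  have hpath : ∀ s r (v : A → ℤ), STS.PathSig Y s r v →
      STS.PathSig X s r (phiRev a ab v) := by
    intro s r v hp
    induction hp with
    | nil => rw [phiRev_zero]; exact STS.PathSig.nil _
    | fwd hp htr ih =>
      rw [phiRev_add]
      rcases htr with htr | htr
      · rw [phiRev_stepVec_of_not_mem a ab _
          (fun hmem => hab (hLab _ _ _ htr ab hmem))]
        exact STS.PathSig.fwd ih htr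
      · obtain ⟨hβ, htrX⟩ := htr' _ _ _ htr
        subst hβ
        rw [phiRev_stepVec_singleton a ab hne]
        have := STS.PathSig.bwd ih htrX
        simpa [sub_eq_add_neg] using this
    | bwd hp htr ih =>
      rw [phiRev_sub]
      rcases htr with htr | htr
      · rw [phiRev_stepVec_of_not_mem a ab _
          (fun hmem => hab (hLab _ _ _ htr ab hmem))]
        exact STS.PathSig.bwd ih htr
      · obtain ⟨hβ, htrX⟩ := htr' _ _ _ htr
        subst hβ
        rw [phiRev_stepVec_singleton a ab hne]
        have := STS.PathSig.fwd ih htrX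
        simpa [sub_neg_eq_add] using this
  -- bowtie transfer
  have hbow : ∀ (v w : A → ℤ), STS.Bowtie Y v w →
      STS.Bowtie X (phiRev a ab v) (phiRev a ab w) := by
    intro v w hb
    induction hb with
    | base h1 h2 => exact STS.Bowtie.base (hpath _ _ _ h1) (hpath _ _ _ h2)
    | refl v => exact STS.Bowtie.refl _
    | symm _ ih => exact ih.symm
    | trans _ _ ih1 ih2 => exact ih1.trans ih2
    | add _ _ ih1 ih2 =>
      rw [phiRev_add, phiRev_add]; exact ih1.add ih2
  intro s r r' v w h1 h2 h3
  exact hCE s r r' _ _ (hpath _ _ _ h1) (hpath _ _ _ h2) (hbow _ _ h3)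
end

section
/- Let TS be a CEST-system and TS^splitrev any of its split reverses. Then TS^mixrev, TS^setrev, TS^rev, and TS^splitrev are all CEST-systems. -/
namespace STS

section Aux

variable {S A : Type*} [DecidableEq A]

lemma sig_cast {X : STS S A} {s r : S} {v w : A → ℤ}
    (h : X.PathSig s r v) (e : v = w) : X.PathSig s r w := e ▸ h

lemma pathSig_single {X : STS S A} {s r : S} {α : Multiset A}
    (h : X.tr s α r) : X.PathSig s r (stepVec α) :=
  sig_cast (PathSig.fwd (PathSig.nil s) h) (zero_add _)

lemma pathSig_append {X : STS S A} {s r t : S} {v w : A → ℤ}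
    (h1 : X.PathSig s r v) (h2 : X.PathSig r t w) : X.PathSig s t (v + w) := by
  induction h2 with
  | nil => simpa using h1
  | fwd h tr ih => exact sig_cast (PathSig.fwd ih tr) (by abel)
  | bwd h tr ih => exact sig_cast (PathSig.bwd ih tr) (by abel)

lemma pathSig_reverse {X : STS S A} {s r : S} {v : A → ℤ}
    (h : X.PathSig s r v) : X.PathSig r s (-v) := by
  induction h with
  | nil => exact sig_cast (PathSig.nil _) (by abel)
  | @fwd r r' α v h tr ih =>
      exact sig_cast (pathSig_append (PathSig.bwd (PathSig.nil r') tr) ih) (by abel)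
  | @bwd r r' α v h tr ih =>
      exact sig_cast (pathSig_append (PathSig.fwd (PathSig.nil r') tr) ih) (by abel)

lemma stepVec_add (α β : Multiset A) :
    (stepVec (α + β) : A → ℤ) = stepVec α + stepVec β := by
  funext a; simp [stepVec]

lemma pathSig_two {X : STS S A} {s t p : S} {α β : Multiset A}
    (h1 : X.tr s α t) (h2 : X.tr t β p) : X.PathSig s p (stepVec (α + β)) :=
  sig_cast (PathSig.fwd (pathSig_single h1) h2) (stepVec_add α β).symm

lemma detSig {X : STS S A} (hCE : X.CE) {s p p' : S} {v : A → ℤ}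
    (h1 : X.PathSig s p v) (h2 : X.PathSig s p' v) : p = p' :=
  hCE s p p' v v h1 h2 (Bowtie.refl v)

section Transport

variable (X Z : STS S A) (F : (A → ℤ) →+ (A → ℤ))

lemma pathSig_transport (hseg : ∀ r γ r', Z.tr r γ r' → X.PathSig r r' (F (stepVec γ)))
    {s r : S} {v : A → ℤ} (h : Z.PathSig s r v) : X.PathSig s r (F v) := by
  induction h with
  | nil => exact sig_cast (PathSig.nil _) (by simp)
  | fwd h tr ih => exact sig_cast (pathSig_append ih (hseg _ _ _ tr)) (by rw [map_add])
  | bwd h tr ih =>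
      exact sig_cast (pathSig_append ih (pathSig_reverse (hseg _ _ _ tr)))
        (by rw [map_sub]; abel)

lemma bowtie_transport (hseg : ∀ r γ r', Z.tr r γ r' → X.PathSig r r' (F (stepVec γ)))
    {v w : A → ℤ} (h : Z.Bowtie v w) : X.Bowtie (F v) (F w) := by
  induction h with
  | base h1 h2 =>
      exact Bowtie.base (pathSig_transport X Z F hseg h1) (pathSig_transport X Z F hseg h2)
  | refl v => exact Bowtie.refl _
  | symm _ ih => exact Bowtie.symm ih
  | trans _ _ ih1 ih2 => exact Bowtie.trans ih1 ih2
  | add _ _ ih1 ih2 => rw [map_add, map_add]; exact Bowtie.add ih1 ih2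

lemma ce_of_transport (hCE : X.CE)
    (hseg : ∀ r γ r', Z.tr r γ r' → X.PathSig r r' (F (stepVec γ))) : Z.CE :=
  fun s r r' v w h1 h2 hb =>
    hCE s r r' (F v) (F w) (pathSig_transport X Z F hseg h1)
      (pathSig_transport X Z F hseg h2) (bowtie_transport X Z F hseg hb)

end Transport

/-- The linear map collapsing reverse actions to negated originals. -/
def phi (X : STS S A) (bar : A → A) : (A → ℤ) →+ (A → ℤ) :=
  AddMonoidHom.mk' (fun v a => if a ∈ X.T then v a - v (bar a) else 0)
    (by intro v w; funext a; by_cases h : a ∈ X.T <;> simp [h] <;> ring)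

@[simp] lemma phi_apply (X : STS S A) (bar : A → A) (v : A → ℤ) (a : A) :
    phi X bar v a = if a ∈ X.T then v a - v (bar a) else 0 := rfl

@[simp] lemma stepVec_zero : (stepVec (0 : Multiset A) : A → ℤ) = 0 := by
  funext a; simp [stepVec]

lemma stepVec_cons (a : A) (α : Multiset A) :
    (stepVec (a ::ₘ α) : A → ℤ) = stepVec {a} + stepVec α := by
  funext b; simp [stepVec, Multiset.count_cons, Multiset.count_singleton]
  split <;> ring

lemma stepVec_single_apply (a b : A) :
    (stepVec ({a} : Multiset A) : A → ℤ) b = if b = a then 1 else 0 := by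
  simp [stepVec, Multiset.count_singleton]

lemma phi_stepVec_single {X : STS S A} {bar : A → A} (hg : X.GoodRev bar)
    {a : A} (ha : a ∈ X.T) :
    phi X bar (stepVec {a}) = stepVec ({a} : Multiset A) := by
  funext c
  rw [phi_apply]
  simp only [stepVec_single_apply]
  by_cases hc : c ∈ X.T
  · have hba : ¬ (bar c = a) := fun h => hg.2 c hc (h ▸ ha)
    simp [hc, hba]
  · have : ¬ (c = a) := fun h => hc (h ▸ ha)
    simp [hc, this]

lemma phi_stepVec_bar_single {X : STS S A} {bar : A → A} (hg : X.GoodRev bar)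
    {a : A} (ha : a ∈ X.T) :
    phi X bar (stepVec {bar a}) = -stepVec ({a} : Multiset A) := by
  funext c
  rw [phi_apply, Pi.neg_apply]
  simp only [stepVec_single_apply]
  by_cases hc : c ∈ X.T
  · have h1 : ¬ (c = bar a) := fun h => hg.2 a ha (h ▸ hc)
    have h2 : (bar c = bar a) ↔ (c = a) := ⟨fun h => hg.1 hc ha h, fun h => h ▸ rfl⟩
    by_cases h3 : c = a
    · subst h3; simp [hc, h1, h2]
    · simp [hc, h1, h2, h3]
  · have h3 : ¬ (c = a) := fun h => hc (h ▸ ha)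
    simp [hc, h3]

lemma phi_stepVec {X : STS S A} {bar : A → A} (hg : X.GoodRev bar)
    {α : Multiset A} (hα : ∀ a ∈ α, a ∈ X.T) :
    phi X bar (stepVec α) = stepVec α := by
  induction α using Multiset.induction with
  | empty => simp
  | cons a α ih =>
      rw [stepVec_cons, map_add, phi_stepVec_single hg (hα a (Multiset.mem_cons_self a α)),
        ih (fun b hb => hα b (Multiset.mem_cons_of_mem hb))]

lemma phi_stepVec_bar {X : STS S A} {bar : A → A} (hg : X.GoodRev bar)
    {α : Multiset A} (hα : ∀ a ∈ α, a ∈ X.T) :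
    phi X bar (stepVec (Multiset.map bar α)) = -stepVec α := by
  induction α using Multiset.induction with
  | empty => simp
  | cons a α ih =>
      rw [Multiset.map_cons, stepVec_cons, map_add,
        phi_stepVec_bar_single hg (hα a (Multiset.mem_cons_self a α)),
        ih (fun b hb => hα b (Multiset.mem_cons_of_mem hb)), stepVec_cons]
      abel

/-- Pushforward of a vector along `noidx`, summed over `Y.T`. -/
def push (Y : STS S A) (noidx : A → A) : (A → ℤ) →+ (A → ℤ) :=
  AddMonoidHom.mk' (fun v a => ∑ b ∈ Y.T.filter (fun b => noidx b = a), v b)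
    (by intro v w; funext a; simp [Finset.sum_add_distrib])

@[simp] lemma push_apply (Y : STS S A) (noidx : A → A) (v : A → ℤ) (a : A) :
    push Y noidx v a = ∑ b ∈ Y.T.filter (fun b => noidx b = a), v b := rfl

lemma push_single {Y : STS S A} {noidx : A → A} {b : A} (hb : b ∈ Y.T) :
    push Y noidx (stepVec {b}) = stepVec ({noidx b} : Multiset A) := by
  funext a
  rw [push_apply, stepVec_single_apply]
  have : ∀ c ∈ Y.T.filter (fun c => noidx c = a), (stepVec ({b} : Multiset A) : A → ℤ) c
      = if c = b then 1 else 0 := fun c _ => stepVec_single_apply b c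
  rw [Finset.sum_congr rfl this, Finset.sum_ite_eq' _ b (fun _ => (1 : ℤ))]
  rcases eq_or_ne (noidx b) a with h | h
  · subst h; simp [Finset.mem_filter, hb]
  · have h' : ¬ (a = noidx b) := fun e => h e.symm
    simp [Finset.mem_filter, h, h']

lemma push_stepVec {Y : STS S A} {noidx : A → A} {δ : Multiset A}
    (hδ : ∀ b ∈ δ, b ∈ Y.T) :
    push Y noidx (stepVec δ) = stepVec (Multiset.map noidx δ) := by
  induction δ using Multiset.induction with
  | empty => simp
  | cons b δ ih =>
      rw [stepVec_cons, map_add, push_single (hδ b (Multiset.mem_cons_self b δ)),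
        ih (fun c hc => hδ c (Multiset.mem_cons_of_mem hc)), Multiset.map_cons, stepVec_cons]

/-- Riesz decomposition for multisets. -/
lemma multiset_riesz {δ ε ρ σ : Multiset A} (h : δ + ε = ρ + σ) :
    ∃ a b c d : Multiset A, δ = a + b ∧ ε = c + d ∧ ρ = a + c ∧ σ = b + d := by
  induction δ using Multiset.induction generalizing ε ρ σ with
  | empty => exact ⟨0, 0, ρ, σ, by simp, by simpa using h, by simp, by simp⟩
  | cons x δ ih =>
      have hx : x ∈ ρ + σ := by
        rw [← h, Multiset.cons_add]; exact Multiset.mem_cons_self x _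
      rcases Multiset.mem_add.1 hx with hc | hc
      · obtain ⟨ρ', rfl⟩ := Multiset.exists_cons_of_mem hc
        have h' : δ + ε = ρ' + σ := by
          have hh : x ::ₘ (δ + ε) = x ::ₘ (ρ' + σ) := by
            simpa [Multiset.cons_add] using h
          exact (Multiset.cons_inj_right _).mp hh
        obtain ⟨a, b, c, d, h1, h2, h3, h4⟩ := ih h'
        exact ⟨x ::ₘ a, b, c, d, by rw [Multiset.cons_add, h1], h2,
          by rw [Multiset.cons_add, h3], h4⟩
      · obtain ⟨σ', rfl⟩ := Multiset.exists_cons_of_mem hc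
        have h' : δ + ε = ρ + σ' := by
          have hh : x ::ₘ (δ + ε) = x ::ₘ (ρ + σ') := by
            simpa [Multiset.cons_add, Multiset.add_cons] using h
          exact (Multiset.cons_inj_right _).mp hh
        obtain ⟨a, b, c, d, h1, h2, h3, h4⟩ := ih h'
        exact ⟨a, x ::ₘ b, c, d, by rw [Multiset.add_cons, h1], h2, h3,
          by rw [Multiset.cons_add, h4]⟩

/-- Splitting a mapped multiset. -/
lemma map_eq_add {f : A → A} {μ α β : Multiset A} (h : Multiset.map f μ = α + β) :
    ∃ μ₁ μ₂, μ = μ₁ + μ₂ ∧ Multiset.map f μ₁ = α ∧ Multiset.map f μ₂ = β := by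
  induction μ using Multiset.induction generalizing α β with
  | empty =>
      have h0 : α + β = 0 := by simpa using h.symm
      have hα : α = 0 := Multiset.le_zero.mp (le_of_le_of_eq (Multiset.le_add_right α β) h0)
      have hβ : β = 0 := Multiset.le_zero.mp (le_of_le_of_eq (Multiset.le_add_left β α) h0)
      exact ⟨0, 0, by simp, by simp [hα], by simp [hβ]⟩
  | cons x μ ih =>
      rw [Multiset.map_cons] at h
      have hx : f x ∈ α + β := by rw [← h]; exact Multiset.mem_cons_self _ _
      rcases Multiset.mem_add.1 hx with hc | hc
      · obtain ⟨α', rfl⟩ := Multiset.exists_cons_of_mem hc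
        have h' : Multiset.map f μ = α' + β := by
          have hh : f x ::ₘ Multiset.map f μ = f x ::ₘ (α' + β) := by
            simpa [Multiset.cons_add] using h
          exact (Multiset.cons_inj_right _).mp hh
        obtain ⟨μ₁, μ₂, rfl, hm1, hm2⟩ := ih h'
        exact ⟨x ::ₘ μ₁, μ₂, by rw [Multiset.cons_add], by rw [Multiset.map_cons, hm1], hm2⟩
      · obtain ⟨β', rfl⟩ := Multiset.exists_cons_of_mem hc
        have h' : Multiset.map f μ = α + β' := by
          have hh : f x ::ₘ Multiset.map f μ = f x ::ₘ (α + β') := by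
            simpa [Multiset.add_cons] using h
          exact (Multiset.cons_inj_right _).mp hh
        obtain ⟨μ₁, μ₂, rfl, hm1, hm2⟩ := ih h'
        exact ⟨μ₁, x ::ₘ μ₂, by rw [Multiset.add_cons], hm1, by rw [Multiset.map_cons, hm2]⟩

lemma rev_seg {X : STS S A} {bar : A → A} (hL : X.LabelsIn) (hg : X.GoodRev bar)
    {r : S} {γ : Multiset A} {r' : S} (h : (X.revSTS bar).tr r γ r') :
    X.PathSig r r' (phi X bar (stepVec γ)) := by
  rcases h with h | ⟨α, rfl, h⟩
  · exact sig_cast (pathSig_single h) (phi_stepVec hg (hL _ _ _ h)).symm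
  · exact sig_cast (PathSig.bwd (PathSig.nil r) h)
      (by rw [phi_stepVec_bar hg (hL _ _ _ h)]; abel)

lemma setrev_seg {X : STS S A} {bar : A → A} (hL : X.LabelsIn) (hg : X.GoodRev bar)
    {r : S} {γ : Multiset A} {r' : S} (h : (X.setrevSTS bar).tr r γ r') :
    X.PathSig r r' (phi X bar (stepVec γ)) := by
  rcases h with h | ⟨α, rfl, -, h⟩
  · exact sig_cast (pathSig_single h) (phi_stepVec hg (hL _ _ _ h)).symm
  · exact sig_cast (PathSig.bwd (PathSig.nil r) h)
      (by rw [phi_stepVec_bar hg (hL _ _ _ h)]; abel)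

lemma mix_seg {X : STS S A} {bar : A → A} (hL : X.LabelsIn) (hg : X.GoodRev bar)
    {u : S} {γ : Multiset A} {v : S} (h : (X.mixrevSTS bar).tr u γ v) :
    X.PathSig u v (phi X bar (stepVec γ)) := by
  obtain ⟨s, α, β, rfl, -, hα, hβ⟩ := h
  refine sig_cast (PathSig.fwd (PathSig.bwd (PathSig.nil u) hα) hβ) ?_
  rw [stepVec_add, map_add, phi_stepVec_bar hg (hL _ _ _ hα), phi_stepVec hg (hL _ _ _ hβ)]
  abel

end Aux

end STS


open STS in
/-- `TS^mixrev`, `TS^setrev`, `TS^rev` and `TS^splitrev` are CEST-systems. -/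
theorem stmt5 {S A : Type*} [DecidableEq A] (X : STS S A) (bar noidx : A → A)
    (hX : X.IsCEST) (hg : X.GoodRev bar)
    (Y : STS S A) (hY : X.IsSplitRev bar noidx Y) :
    (X.mixrevSTS bar).IsCEST ∧ (X.setrevSTS bar).IsCEST ∧
    (X.revSTS bar).IsCEST ∧ Y.IsCEST := by
  obtain ⟨hL, hCE, hREA, hEL, hSEQ⟩ := hX
  obtain ⟨hYinit, hYL, -, -, -, hYSEQ, -, hYiff⟩ := hY
  have det : ∀ {s p p' : S} {v : A → ℤ}, X.PathSig s p v → X.PathSig s p' v → p = p' :=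
    fun h1 h2 => detSig hCE h1 h2
  -- reachability lifting
  have lift : ∀ {Z : STS S A}, (∀ r (γ : Multiset A) r', X.tr r γ r' →
      ∃ δ : Multiset A, Z.tr r δ r') → Z.init = X.init → Z.REA := by
    intro Z hmono hinit s
    rw [hinit]
    induction hREA s with
    | refl => exact ReachFrom.refl _
    | step h tr ih =>
        obtain ⟨δ, hδ⟩ := hmono _ _ _ tr
        exact ReachFrom.step ih hδ
  refine ⟨⟨?_, ?_, ?_, ?_, ?_⟩, ⟨?_, ?_, ?_, ?_, ?_⟩, ⟨?_, ?_, ?_, ?_, ?_⟩, ⟨?_, ?_, ?_, ?_, ?_⟩⟩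
  -- mixrev: LabelsIn
  · rintro s γ s' ⟨t, α, β, rfl, -, hα, hβ⟩ a ha
    rcases Multiset.mem_add.1 ha with h' | h'
    · obtain ⟨b, hb, rfl⟩ := Multiset.mem_map.1 h'
      exact Finset.mem_union_right _ (Finset.mem_image_of_mem bar (hL _ _ _ hα b hb))
    · exact Finset.mem_union_left _ (hL _ _ _ hβ a h')
  -- mixrev: CE
  · exact ce_of_transport X _ (phi X bar) hCE (fun r γ r' h => mix_seg hL hg h)
  -- mixrev: REA
  · exact lift (fun r γ r' h =>
      ⟨γ, r, 0, γ, by simp, ⟨r', by simpa using h⟩, hEL r, h⟩) rfl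
  -- mixrev: EL
  · exact fun s => ⟨s, 0, 0, by simp, ⟨s, by simpa using hEL s⟩, hEL s, hEL s⟩
  -- mixrev: SEQ
  · rintro u γ₁ γ₂ ⟨v', s, α, β, heq, ⟨w, hw⟩, hα, hβ⟩
    obtain ⟨a, b, c, d, h1, h2, h3, h4⟩ := multiset_riesz heq
    obtain ⟨α₁, α₂, rfl, ha1, ha2⟩ := map_eq_add h3
    subst h1 h2 h4
    have eq1 : α₁ + α₂ + (b + d) = α₂ + (α₁ + (b + d)) := by abel
    obtain ⟨s', hs', hA⟩ := hSEQ s α₂ (α₁ + (b + d)) ⟨w, eq1 ▸ hw⟩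
    obtain ⟨p, hp, -⟩ := hSEQ s' α₁ (b + d) hA
    have hpu : p = u := det (pathSig_two hs' hp)
      (sig_cast (pathSig_single hα) (by rw [add_comm α₁ α₂]))
    subst hpu
    have eq2 : α₁ + (b + d) = b + (α₁ + d) := by abel
    obtain ⟨t, ht, -⟩ := hSEQ s' b (α₁ + d) (eq2 ▸ hA)
    have eq3 : α₁ + (b + d) = (α₁ + b) + d := by abel
    obtain ⟨w1, hw1, -⟩ := hSEQ s' (α₁ + b) d (eq3 ▸ hA)
    have eq4 : α₁ + α₂ + (b + d) = b + (α₁ + α₂ + d) := by abel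
    obtain ⟨s₂, hs₂, hE⟩ := hSEQ s b (α₁ + α₂ + d) ⟨w, eq4 ▸ hw⟩
    have eq5 : α₁ + α₂ + d = α₂ + (α₁ + d) := by abel
    obtain ⟨q, hq, -⟩ := hSEQ s₂ α₂ (α₁ + d) (eq5 ▸ hE)
    have hqt : q = t := det (pathSig_two hs₂ hq)
      (sig_cast (pathSig_two hs' ht) (by rw [add_comm α₂ b]))
    rw [← hqt] at ht
    have eq6 : α₁ + α₂ + d = d + (α₁ + α₂) := by abel
    obtain ⟨r, hr, -⟩ := hSEQ s₂ d (α₁ + α₂) (eq6 ▸ hE)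
    have eq7 : α₁ + α₂ + d = (α₂ + d) + α₁ := by abel
    obtain ⟨w2, hw2, -⟩ := hSEQ s₂ (α₂ + d) α₁ (eq7 ▸ hE)
    exact ⟨q, ⟨s', α₁, b, by rw [ha1], ⟨w1, hw1⟩, hp, ht⟩,
      r, ⟨s₂, α₂, d, by rw [ha2], ⟨w2, hw2⟩, hq, hr⟩⟩
  -- setrev: LabelsIn
  · rintro s γ s' (h | ⟨α, rfl, -, h⟩) a ha
    · exact Finset.mem_union_left _ (hL _ _ _ h a ha)
    · obtain ⟨b, hb, rfl⟩ := Multiset.mem_map.1 ha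
      exact Finset.mem_union_right _ (Finset.mem_image_of_mem bar (hL _ _ _ h b hb))
  -- setrev: CE
  · exact ce_of_transport X _ (phi X bar) hCE (fun r γ r' h => setrev_seg hL hg h)
  -- setrev: REA
  · exact lift (fun r γ r' h => ⟨γ, Or.inl h⟩) rfl
  -- setrev: EL
  · exact fun s => Or.inl (hEL s)
  -- setrev: SEQ
  · rintro s α β ⟨s'', h | ⟨μ, hγ, hnd, hμ⟩⟩
    · obtain ⟨s', h1, s''', h2⟩ := hSEQ s α β ⟨s'', h⟩
      exact ⟨s', Or.inl h1, s''', Or.inl h2⟩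
    · obtain ⟨μ₁, μ₂, rfl, hm1, hm2⟩ := map_eq_add hγ.symm
      have hnd1 : μ₁.Nodup := Multiset.nodup_of_le (Multiset.le_add_right _ _) hnd
      have hnd2 : μ₂.Nodup := Multiset.nodup_of_le (Multiset.le_add_left _ _) hnd
      have hμ' : X.tr s'' (μ₂ + μ₁) s := by rwa [add_comm] at hμ
      obtain ⟨t, h1, w, h2⟩ := hSEQ s'' μ₂ μ₁ ⟨s, hμ'⟩
      have hw : w = s := det (pathSig_two h1 h2)
        (sig_cast (pathSig_single hμ) (by rw [add_comm μ₁ μ₂]))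
      subst hw
      exact ⟨t, Or.inr ⟨μ₁, hm1.symm, hnd1, h2⟩, s'', Or.inr ⟨μ₂, hm2.symm, hnd2, h1⟩⟩
  -- rev: LabelsIn
  · rintro s γ s' (h | ⟨α, rfl, h⟩) a ha
    · exact Finset.mem_union_left _ (hL _ _ _ h a ha)
    · obtain ⟨b, hb, rfl⟩ := Multiset.mem_map.1 ha
      exact Finset.mem_union_right _ (Finset.mem_image_of_mem bar (hL _ _ _ h b hb))
  -- rev: CE
  · exact ce_of_transport X _ (phi X bar) hCE (fun r γ r' h => rev_seg hL hg h)
  -- rev: REA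
  · exact lift (fun r γ r' h => ⟨γ, Or.inl h⟩) rfl
  -- rev: EL
  · exact fun s => Or.inl (hEL s)
  -- rev: SEQ
  · rintro s α β ⟨s'', h | ⟨μ, hγ, hμ⟩⟩
    · obtain ⟨s', h1, s''', h2⟩ := hSEQ s α β ⟨s'', h⟩
      exact ⟨s', Or.inl h1, s''', Or.inl h2⟩
    · obtain ⟨μ₁, μ₂, rfl, hm1, hm2⟩ := map_eq_add hγ.symm
      have hμ' : X.tr s'' (μ₂ + μ₁) s := by rwa [add_comm] at hμ
      obtain ⟨t, h1, w, h2⟩ := hSEQ s'' μ₂ μ₁ ⟨s, hμ'⟩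
      have hw : w = s := det (pathSig_two h1 h2)
        (sig_cast (pathSig_single hμ) (by rw [add_comm μ₁ μ₂]))
      subst hw
      exact ⟨t, Or.inr ⟨μ₁, hm1.symm, h2⟩, s'', Or.inr ⟨μ₂, hm2.symm, h1⟩⟩
  -- Y: LabelsIn
  · exact hYL
  -- Y: CE
  · refine ce_of_transport X Y ((phi X bar).comp (push Y noidx)) hCE ?_
    intro r δ r' h
    have hrev : (X.revSTS bar).tr r (Multiset.map noidx δ) r' :=
      (hYiff r (Multiset.map noidx δ) r').mp ⟨δ, h, rfl⟩
    refine sig_cast (rev_seg hL hg hrev) ?_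
    rw [AddMonoidHom.comp_apply, push_stepVec (fun b hb => hYL _ _ _ h b hb)]
  -- Y: REA
  · refine lift (fun r γ r' h => ?_) hYinit
    obtain ⟨δ, hδ, -⟩ := (hYiff r γ r').mpr (Or.inl h)
    exact ⟨δ, hδ⟩
  -- Y: EL
  · intro s
    obtain ⟨δ, hδ, h0⟩ := (hYiff s 0 s).mpr (Or.inl (hEL s))
    rwa [Multiset.map_eq_zero.mp h0.symm] at hδ
  -- Y: SEQ
  · exact hYSEQ
end

section
/- Let TS be a CEST-system and TS^splitrev any of its split reverses. If any step transition system among TS^mixrev, TS^setrev, TS^rev, and TS^splitrev is solvable by a PT-net, then TS is also solvable. -/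
section Aux

open STS

variable {S A : Type*} [DecidableEq A]

/-- In a CEST-system, empty steps are loops. -/
lemma empty_step_eq (X : STS S A) (hX : X.IsCEST) {s s' : S}
    (h : X.tr s 0 s') : s = s' := by
  obtain ⟨-, hCE, -, -, -⟩ := hX
  have hv : STS.stepVec (0 : Multiset A) = 0 := by
    funext a; simp [STS.stepVec]
  have h1 : STS.PathSig X s s' ((0 : A → ℤ) + STS.stepVec (0 : Multiset A)) :=
    STS.PathSig.fwd (STS.PathSig.nil s) h
  rw [hv, add_zero] at h1
  exact (hCE s s' s 0 0 h1 (STS.PathSig.nil s) (STS.Bowtie.refl 0)).symm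

/-- Key lemma: if `Z` agrees with `X` on steps labelled over `X.T`,
has the same initial state, and contains `X`'s actions, then solvability
of `Z` implies solvability of `X`. -/
lemma key_solvable (X : STS S A) (hX : X.IsCEST) (Z : STS S A)
    (hinit : Z.init = X.init) (hT : X.T ⊆ Z.T)
    (htr : ∀ s (α : Multiset A) s', (∀ a ∈ α, a ∈ X.T) →
      (Z.tr s α s' ↔ X.tr s α s'))
    (hsol : STSSolvable Z) : STSSolvable X := by
  obtain ⟨hLab, -, hREA, -, -⟩ := hX
  obtain ⟨n, N, ψ, hψinit, hψT, hψtr⟩ := hsol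
  set N' : PTNet (Fin n) A := N.restrict X.T with hN'
  refine ⟨n, N', ?_⟩
  have hTN : X.T ⊆ N.T := by have := hT; rwa [hψT] at this
  -- the candidate state map
  set φ : S → (Fin n → ℕ) := fun s => (ψ s).1 with hφ
  have hφinit : φ X.init = N.M0 := by
    have := hψinit
    rw [← hinit]
    exact congrArg Subtype.val hψinit
  -- X-transitions give CRG N transitions
  have fwdtr : ∀ s (α : Multiset A) s', X.tr s α s' →
      N.Enabled (φ s) α ∧ φ s' = N.fire (φ s) α := by
    intro s α s' h
    have hαT : ∀ a ∈ α, a ∈ X.T := hLab s α s' h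
    have hZ : Z.tr s α s' := (htr s α s' hαT).mpr h
    have := (hψtr s α s').mp hZ
    exact ⟨this.1, this.2⟩
  have fwdtr' : ∀ s (α : Multiset A) s', X.tr s α s' →
      N'.Enabled (φ s) α ∧ φ s' = N'.fire (φ s) α := by
    intro s α s' h
    obtain ⟨⟨he1, he2⟩, hf⟩ := fwdtr s α s' h
    have hαT : ∀ a ∈ α, a ∈ X.T := hLab s α s' h
    refine ⟨⟨fun a ha => ?_, he2⟩, hf⟩
    exact Finset.mem_inter.mpr ⟨he1 a ha, hαT a ha⟩
  -- every φ s is reachable in N'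
  have reach1 : ∀ s, N'.Reach (φ s) := by
    intro s
    have hr := hREA s
    induction hr with
    | refl => rw [hφinit]; exact PTNet.Reach.init
    | step hpath hstep ih =>
      obtain ⟨he, hf⟩ := fwdtr' _ _ _ hstep
      rw [hf]; exact PTNet.Reach.step ih he
  -- every N'-reachable marking is some φ s
  have reach2 : ∀ M, N'.Reach M → ∃ s, φ s = M := by
    intro M hM
    induction hM with
    | init => exact ⟨X.init, hφinit⟩
    | @step M α hM he ih =>
      obtain ⟨s, hs⟩ := ih
      have heN : N.Enabled M α := ⟨fun a ha => Finset.mem_of_mem_inter_left (he.1 a ha), he.2⟩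
      have hreachM : N.Reach M := by
        have := (ψ s).2; rwa [show (ψ s).1 = M from hs] at this
      have hreach2 : N.Reach (N.fire M α) := PTNet.Reach.step hreachM heN
      set s' := ψ.symm ⟨N.fire M α, hreach2⟩ with hs'
      refine ⟨s', ?_⟩
      have hψs' : ψ s' = ⟨N.fire M α, hreach2⟩ := ψ.apply_symm_apply _
      have : φ s' = N.fire M α := congrArg Subtype.val hψs'
      simp only [this]
      rfl
  -- build the equivalence
  have hbij : Function.Bijective (fun s => (⟨φ s, reach1 s⟩ :
      {M : Fin n → ℕ // N'.Reach M})) := by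
    constructor
    · intro a b hab
      have hab' : (⟨φ a, reach1 a⟩ : {M : Fin n → ℕ // N'.Reach M}) =
          ⟨φ b, reach1 b⟩ := hab
      injection hab' with h
      exact ψ.injective (Subtype.ext h)
    · rintro ⟨M, hM⟩
      obtain ⟨s, hs⟩ := reach2 M hM
      exact ⟨s, Subtype.ext hs⟩
  refine ⟨Equiv.ofBijective _ hbij, ?_, ?_, ?_⟩
  · exact Subtype.ext hφinit
  · show X.T = N.T ∩ X.T
    ext a
    constructor
    · intro ha; exact Finset.mem_inter.mpr ⟨hTN ha, ha⟩
    · intro ha; exact (Finset.mem_inter.mp ha).2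
  · intro s α s'
    constructor
    · intro h
      exact fwdtr' s α s' h
    · rintro ⟨he, hf⟩
      have hαT : ∀ a ∈ α, a ∈ X.T := fun a ha =>
        (Finset.mem_inter.mp (he.1 a ha)).2
      have heN : N.Enabled (φ s) α := ⟨fun a ha => Finset.mem_of_mem_inter_left (he.1 a ha), he.2⟩
      have hZ : Z.tr s α s' := (hψtr s α s').mpr ⟨heN, hf⟩
      exact (htr s α s' hαT).mp hZ

/-- Reverse steps over `X.T` must be empty. -/
lemma rev_empty (X : STS S A) (hX : X.IsCEST) (hg : X.GoodRev bar)
    {α : Multiset A} {s s' : S} (h : X.tr s' α s)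
    (hmem : ∀ a ∈ Multiset.map bar α, a ∈ X.T) : α = 0 := by
  by_contra hne
  obtain ⟨a, ha⟩ := Multiset.exists_mem_of_ne_zero hne
  have haT : a ∈ X.T := hX.1 s' α s h a ha
  have : bar a ∈ X.T := hmem (bar a) (Multiset.mem_map_of_mem bar ha)
  exact hg.2 a haT this

end Aux

/-- If any of `TS^mixrev`, `TS^setrev`, `TS^rev`, `TS^splitrev` is solvable,
then so is `TS`. -/
theorem stmt6 {S A : Type*} [DecidableEq A] (X : STS S A) (bar noidx : A → A)
    (hX : X.IsCEST) (hg : X.GoodRev bar)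
    (Y : STS S A) (hY : X.IsSplitRev bar noidx Y)
    (hsol : STSSolvable (X.mixrevSTS bar) ∨ STSSolvable (X.setrevSTS bar) ∨
            STSSolvable (X.revSTS bar) ∨ STSSolvable Y) :
    STSSolvable X := by
  obtain ⟨hinitY, hLabY, hTY, hnoidx, hdisj, -, -, hYrev⟩ := hY
  have hEL := hX.2.2.2.1
  -- common fact: revSTS transitions over X.T are X transitions
  have hrevX : ∀ s (α : Multiset A) s', (∀ a ∈ α, a ∈ X.T) →
      ((X.revSTS bar).tr s α s' ↔ X.tr s α s') := by
    intro s α s' hαT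
    constructor
    · rintro (h | ⟨β, rfl, h⟩)
      · exact h
      · have hβ0 : β = 0 := rev_empty X hX hg h hαT
        subst hβ0
        simp only [Multiset.map_zero]
        rw [← empty_step_eq X hX h]
        exact hEL s'
    · exact Or.inl
  rcases hsol with h | h | h | h
  · -- mixrev
    refine key_solvable X hX (X.mixrevSTS bar) rfl Finset.subset_union_left
      (fun s α s' hαT => ?_) h
    constructor
    · rintro ⟨r, β, γ, rfl, -, hβ, hγ⟩
      have hβ0 : β = 0 := rev_empty X hX hg hβ
        (fun a ha => hαT a (Multiset.mem_add.mpr (Or.inl ha)))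
      subst hβ0
      simp only [Multiset.map_zero, zero_add]
      rw [← empty_step_eq X hX hβ]
      exact hγ
    · intro h'
      exact ⟨s, 0, α, by simp, ⟨s', by simpa using h'⟩, hEL s, h'⟩
  · -- setrev
    refine key_solvable X hX (X.setrevSTS bar) rfl Finset.subset_union_left
      (fun s α s' hαT => ?_) h
    constructor
    · rintro (h' | ⟨β, rfl, -, h'⟩)
      · exact h'
      · have hβ0 : β = 0 := rev_empty X hX hg h' hαT
        subst hβ0
        simp only [Multiset.map_zero]
        rw [← empty_step_eq X hX h']
        exact hEL s'
    · exact Or.inl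
  · -- rev
    exact key_solvable X hX (X.revSTS bar) rfl Finset.subset_union_left
      (fun s α s' hαT => hrevX s α s' hαT) h
  · -- splitrev
    refine key_solvable X hX Y hinitY hTY (fun s α s' hαT => ?_) h
    constructor
    · intro h'
      have hmap : Multiset.map noidx α = α := by
        rw [Multiset.map_congr rfl (fun a ha => hnoidx a (hαT a ha)), Multiset.map_id']
      have : (X.revSTS bar).tr s α s' :=
        (hYrev s α s').mp ⟨α, h', hmap.symm⟩
      exact (hrevX s α s' hαT).mp this
    · intro h'
      obtain ⟨δ, hδtr, hδ⟩ := (hYrev s α s').mpr (Or.inl h')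
      have hδX : ∀ d ∈ δ, d ∈ X.T := by
        intro d hd
        have hdY : d ∈ Y.T := hLabY s δ s' hδtr d hd
        by_contra hdX
        have h1 : noidx d ∈ (Y.T \ X.T).image noidx :=
          Finset.mem_image_of_mem noidx (Finset.mem_sdiff.mpr ⟨hdY, hdX⟩)
        have h2 : noidx d ∈ X.T := by
          rw [hδ] at hαT
          exact hαT (noidx d) (Multiset.mem_map_of_mem noidx hd)
        exact (Finset.disjoint_left.mp hdisj h2) h1
      have : α = δ := by
        rw [hδ, Multiset.map_congr rfl (fun d hd => hnoidx d (hδX d hd)), Multiset.map_id']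
      rwa [this]
end

section
/- Let TS=(S,T,→,s₀) be a CEST-system, TS^splitrev any of its split reverses, and α,β ∈ Mult(T). Then: (1) s –α→ s' in TS^mixrev iff s –α→ s' in TS^rev iff s –α→ s' in TS^splitrev iff s –α→ s' in TS; (2) s –ᾱ→ s' in TS^mixrev iff s –ᾱ→ s' in TS^rev. -/
private lemma stepVec_zero' {A : Type*} [DecidableEq A] :
    STS.stepVec (0 : Multiset A) = 0 := by
  funext a; simp [STS.stepVec]

private lemma tr_det' {S A : Type*} [DecidableEq A] {X : STS S A} (hCE : X.CE)
    {s u v : S} {α : Multiset A} (h1 : X.tr s α u) (h2 : X.tr s α v) : u = v :=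
  hCE s u v _ _ ((STS.PathSig.nil s).fwd h1) ((STS.PathSig.nil s).fwd h2)
    (STS.Bowtie.refl _)

private lemma tr_zero' {S A : Type*} [DecidableEq A] {X : STS S A} (hCE : X.CE)
    {u v : S} (h : X.tr u 0 v) : u = v := by
  have h1 : X.PathSig u v 0 := by
    have := (STS.PathSig.nil u).fwd h
    rwa [stepVec_zero', add_zero] at this
  exact (hCE u v u _ _ h1 (STS.PathSig.nil u) (STS.Bowtie.refl _)).symm

private lemma map_bar_inj' {A : Type*} [DecidableEq A] {T : Finset A} {bar : A → A}
    (hinj : Set.InjOn bar ↑T) :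
    ∀ (α β : Multiset A), (∀ a ∈ α, a ∈ T) → (∀ a ∈ β, a ∈ T) →
      Multiset.map bar α = Multiset.map bar β → α = β := by
  intro α
  induction α using Multiset.induction with
  | empty =>
    intro β _ _ h
    simp only [Multiset.map_zero] at h
    exact (Multiset.map_eq_zero.mp h.symm).symm
  | cons a α ih =>
    intro β hα hβ h
    have haT : a ∈ T := hα a (Multiset.mem_cons_self a α)
    have hmem : bar a ∈ Multiset.map bar β := by
      rw [← h]; simp
    obtain ⟨b, hb, hba⟩ := Multiset.mem_map.mp hmem
    have hb' : b = a := hinj (hβ b hb) haT hba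
    subst hb'
    have hβ' : β = b ::ₘ β.erase b := (Multiset.cons_erase hb).symm
    rw [hβ', Multiset.map_cons, Multiset.map_cons, Multiset.cons_inj_right] at h
    have : α = β.erase b := by
      refine ih (β.erase b) (fun x hx => hα x (Multiset.mem_cons_of_mem hx))
        (fun x hx => hβ x (Multiset.mem_of_mem_erase hx)) h
    rw [hβ', this]

/-- Lemma on steps over `T` and over `T̄` in the reversed systems. -/
theorem stmt7 {S A : Type*} [DecidableEq A] (X : STS S A) (bar noidx : A → A)
    (hX : X.IsCEST) (hg : X.GoodRev bar)
    (Y : STS S A) (hY : X.IsSplitRev bar noidx Y)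
    (s s' : S) (α : Multiset A) (hα : ∀ a ∈ α, a ∈ X.T) :
    (((X.mixrevSTS bar).tr s α s' ↔ (X.revSTS bar).tr s α s') ∧
     ((X.revSTS bar).tr s α s' ↔ Y.tr s α s') ∧
     (Y.tr s α s' ↔ X.tr s α s')) ∧
    ((X.mixrevSTS bar).tr s (Multiset.map bar α) s' ↔
      (X.revSTS bar).tr s (Multiset.map bar α) s') := by
  obtain ⟨hL, hCE, hREA, hEL, hSEQ⟩ := hX
  obtain ⟨hinj, hfresh⟩ := hg
  obtain ⟨hinit, hYL, hsub, hfix, hdisj, hYSEQ, himg, htr⟩ := hY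
  -- mixrev over T ↔ X
  have mixX : (X.mixrevSTS bar).tr s α s' ↔ X.tr s α s' := by
    constructor
    · rintro ⟨s₀, α', β, heq, ⟨w, hw⟩, h1, h2⟩
      have hα'0 : α' = 0 := by
        refine Multiset.eq_zero_of_forall_notMem (fun a ha => ?_)
        have haT : a ∈ X.T := hL _ _ _ h1 a ha
        have : bar a ∈ α := by
          rw [heq]; exact Multiset.mem_add.mpr (Or.inl (Multiset.mem_map_of_mem bar ha))
        exact hfresh a haT (hα _ this)
      subst hα'0
      simp only [Multiset.map_zero, zero_add] at heq
      subst heq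
      have : s₀ = s := tr_zero' hCE h1
      subst this
      exact h2
    · intro h
      refine ⟨s, 0, α, by simp, ⟨s', by simpa using h⟩, hEL s, h⟩
  -- rev over T ↔ X
  have revX : (X.revSTS bar).tr s α s' ↔ X.tr s α s' := by
    constructor
    · rintro (h | ⟨α', heq, h⟩)
      · exact h
      · have hα'0 : α' = 0 := by
          refine Multiset.eq_zero_of_forall_notMem (fun a ha => ?_)
          have haT : a ∈ X.T := hL _ _ _ h a ha
          have : bar a ∈ α := by
            rw [heq]; exact Multiset.mem_map_of_mem bar ha
          exact hfresh a haT (hα _ this)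
        subst hα'0
        simp only [Multiset.map_zero] at heq
        subst heq
        have : s' = s := tr_zero' hCE h
        subst this
        exact hEL _
    · exact fun h => Or.inl h
  -- rev over T ↔ Y
  have revY : (X.revSTS bar).tr s α s' ↔ Y.tr s α s' := by
    constructor
    · intro h
      obtain ⟨δ, hδ, hmap⟩ := (htr s α s').mpr h
      have hδT : ∀ d ∈ δ, d ∈ X.T := by
        intro d hd
        by_contra hdX
        have hdY : d ∈ Y.T := hYL _ _ _ hδ d hd
        have h1 : noidx d ∈ (Y.T \ X.T).image noidx :=
          Finset.mem_image_of_mem noidx (Finset.mem_sdiff.mpr ⟨hdY, hdX⟩)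
        have h2 : noidx d ∈ X.T := by
          refine hα _ ?_
          rw [hmap]; exact Multiset.mem_map_of_mem noidx hd
        exact (Finset.disjoint_left.mp hdisj h2) h1
      have : Multiset.map noidx δ = δ := by
        rw [Multiset.map_congr rfl (fun d hd => hfix d (hδT d hd)), Multiset.map_id']
      rw [hmap, this]
      exact hδ
    · intro h
      refine (htr s α s').mp ⟨α, h, ?_⟩
      rw [Multiset.map_congr rfl (fun d hd => hfix d (hα d hd)), Multiset.map_id']
  refine ⟨⟨mixX.trans revX.symm, revY, revY.symm.trans revX⟩, ?_⟩
  -- part 2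
  constructor
  · rintro ⟨s₀, α', β, heq, ⟨w, hw⟩, h1, h2⟩
    have hβ0 : β = 0 := by
      refine Multiset.eq_zero_of_forall_notMem (fun b hb => ?_)
      have hbT : b ∈ X.T := hL _ _ _ h2 b hb
      have : b ∈ Multiset.map bar α := by
        rw [heq]; exact Multiset.mem_add.mpr (Or.inr hb)
      obtain ⟨a, ha, hab⟩ := Multiset.mem_map.mp this
      exact hfresh a (hα a ha) (hab ▸ hbT)
    subst hβ0
    simp only [add_zero] at heq
    have : s₀ = s' := tr_zero' hCE h2
    subst this
    have hαα' : α = α' := map_bar_inj' hinj α α' hα (hL _ _ _ h1) heq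
    subst hαα'
    exact Or.inr ⟨α, rfl, h1⟩
  · rintro (h | ⟨α', heq, h⟩)
    · have hα0 : α = 0 := by
        refine Multiset.eq_zero_of_forall_notMem (fun a ha => ?_)
        have : bar a ∈ Multiset.map bar α := Multiset.mem_map_of_mem bar ha
        exact hfresh a (hα a ha) (hL _ _ _ h _ this)
      subst hα0
      simp only [Multiset.map_zero] at h ⊢
      have : s = s' := tr_zero' hCE h
      subst this
      exact ⟨s, 0, 0, by simp, ⟨s, by simpa using hEL s⟩, hEL s, hEL s⟩
    · have hαα' : α = α' := map_bar_inj' hinj α α' hα (hL _ _ _ h) heq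
      subst hαα'
      exact ⟨s', α, 0, by simp, ⟨s, by simpa using h⟩, h, hEL s'⟩
end

section
/- Let TS be a CEST-system which is not a set transition system, i.e., some transition of TS is labelled by a step containing an action with multiplicity at least 2. Then TS^rev is not solvable by any PT-net. -/
/-- If a CEST-system is not a set transition system, then its direct reverse
is not solvable. -/
theorem stmt8 {S A : Type*} [DecidableEq A] (X : STS S A) (bar : A → A)
    (hX : X.IsCEST) (hg : X.GoodRev bar)
    (hns : ∃ (s : S) (α : Multiset A) (s' : S) (a : A),
      X.tr s α s' ∧ 2 ≤ α.count a) :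
    ¬ STSSolvable (X.revSTS bar) := by
  rintro ⟨n, N, ψ, hinit, hT, htr⟩
  obtain ⟨hlab, _hce, _hrea, _hel, hseq⟩ := hX
  obtain ⟨s, α, s', a, hα, ha2⟩ := hns
  have haT : a ∈ X.T := hlab s α s' hα a (by rw [← Multiset.count_pos]; omega)
  -- decompose α as {a,a} + rest and use SEQ twice
  have hle : Multiset.replicate 2 a ≤ α := by
    rw [Multiset.le_iff_count]
    intro b
    rw [Multiset.count_replicate]
    split
    · rename_i h; subst h; omega
    · omega
  have hdecomp : Multiset.replicate 2 a + (α - Multiset.replicate 2 a) = α := by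
    rw [add_comm]; exact tsub_add_cancel_of_le hle
  obtain ⟨t, ht, -⟩ :=
    hseq s (Multiset.replicate 2 a) (α - Multiset.replicate 2 a) ⟨s', by rwa [hdecomp]⟩
  have hrep : ({a} : Multiset A) + {a} = Multiset.replicate 2 a := by
    rw [Multiset.singleton_add]; rfl
  obtain ⟨u, hu, -⟩ := hseq s {a} {a} ⟨t, by rwa [hrep]⟩
  -- transitions in the reversed system
  have r1 : (X.revSTS bar).tr s {a} u := Or.inl hu
  have r2 : (X.revSTS bar).tr s (Multiset.replicate 2 a) t := Or.inl ht
  have r3 : (X.revSTS bar).tr t (Multiset.replicate 2 (bar a)) s :=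
    Or.inr ⟨Multiset.replicate 2 a, by rw [Multiset.map_replicate], ht⟩
  have r4 : (X.revSTS bar).tr u {bar a} s :=
    Or.inr ⟨{a}, by rw [Multiset.map_singleton], hu⟩
  -- transfer to the net via the isomorphism
  obtain ⟨h1, e1⟩ := (htr s {a} u).mp r1
  obtain ⟨h2, e2⟩ := (htr s (Multiset.replicate 2 a) t).mp r2
  obtain ⟨h3, -⟩ := (htr t (Multiset.replicate 2 (bar a)) s).mp r3
  obtain ⟨h4, -⟩ := (htr u {bar a} s).mp r4
  -- PRE/POST computations
  have hPREs : ∀ (b : A) (p : Fin n), N.PRE {b} p = N.pre p b := by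
    intro b p; simp [PTNet.PRE]
  have hPOSTs : ∀ (b : A) (p : Fin n), N.POST {b} p = N.post b p := by
    intro b p; simp [PTNet.POST]
  have hPREr : ∀ (b : A) (p : Fin n), N.PRE (Multiset.replicate 2 b) p = 2 * N.pre p b := by
    intro b p
    simp [PTNet.PRE, Multiset.map_replicate, Multiset.sum_replicate, two_nsmul, two_mul]
  have hPOSTr : ∀ (b : A) (p : Fin n), N.POST (Multiset.replicate 2 b) p = 2 * N.post b p := by
    intro b p
    simp [PTNet.POST, Multiset.map_replicate, Multiset.sum_replicate, two_nsmul, two_mul]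
  -- the mixed step {a, bar a} is enabled at the marking of u
  have hEn : N.Enabled (ψ u).1 ({a} + {bar a}) := by
    constructor
    · intro b hb
      rw [Multiset.mem_add, Multiset.mem_singleton, Multiset.mem_singleton] at hb
      rcases hb with rfl | rfl
      · exact h1.1 _ (Multiset.mem_singleton_self _)
      · exact h4.1 _ (Multiset.mem_singleton_self _)
    · intro p
      have hpre : N.PRE ({a} + {bar a}) p = N.pre p a + N.pre p (bar a) := by
        simp [PTNet.PRE]
      have k2 := h2.2 p
      have k3 := h3.2 p
      rw [hPREr] at k2 k3
      rw [e2] at k3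
      rw [hpre, e1]
      simp only [PTNet.fire, hPREs, hPOSTs, hPREr, hPOSTr] at *
      omega
  -- hence the CRG has a transition labelled {a, bar a} from ψ u
  set M' : {M : Fin n → ℕ // N.Reach M} :=
    ⟨N.fire (ψ u).1 ({a} + {bar a}), PTNet.Reach.step (ψ u).2 hEn⟩ with hM'
  have hCRG : (CRG N).tr (ψ u) ({a} + {bar a}) (ψ (ψ.symm M')) := by
    rw [Equiv.apply_symm_apply]
    exact ⟨hEn, rfl⟩
  have hrev : (X.revSTS bar).tr u ({a} + {bar a}) (ψ.symm M') :=
    (htr u ({a} + {bar a}) (ψ.symm M')).mpr hCRG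
  -- but revSTS has no mixed-label transition: contradiction
  rcases hrev with h | ⟨β, heq, hβ⟩
  · have : bar a ∈ X.T :=
      hlab _ _ _ h (bar a)
        (by rw [Multiset.mem_add]; exact Or.inr (Multiset.mem_singleton_self _))
    exact hg.2 a haT this
  · have hain : a ∈ Multiset.map bar β := by
      rw [← heq, Multiset.mem_add]
      exact Or.inl (Multiset.mem_singleton_self _)
    obtain ⟨b, hb, hba⟩ := Multiset.mem_map.mp hain
    have hbT : b ∈ X.T := hlab _ _ _ hβ b hb
    exact hg.2 b hbT (hba ▸ haT)
end

section
/- Let TS be a set CEST-system, i.e., a CEST-system in which every transition label is a set. If TS^mixrev is solvable by a PT-net, then TS^rev is also solvable. -/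
namespace Stmt10Aux

open STS PTNet

variable {S A : Type*} [DecidableEq A]

/-- Forward determinism at the empty step, from CE. -/
lemma zero_tr_eq {X : STS S A} (hCE : X.CE) {s u : S} (h : X.tr s 0 u) : u = s := by
  have h1 : X.PathSig s u ((0 : A → ℤ) + STS.stepVec (0 : Multiset A)) :=
    STS.PathSig.fwd (STS.PathSig.nil s) h
  have hz : ((0 : A → ℤ) + STS.stepVec (0 : Multiset A)) = 0 := by
    funext a; simp [STS.stepVec]
  rw [hz] at h1
  exact hCE s u s 0 0 h1 (STS.PathSig.nil s) (STS.Bowtie.refl 0)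

/-- A step is pure if it never mixes a forward action with a reversed action. -/
def Pure (X : STS S A) (bar : A → A) (γ : Multiset A) : Prop :=
  ∀ a ∈ X.T, ∀ b ∈ X.T, γ.count a + γ.count (bar b) ≤ 1

lemma rev_iff_mixrev_pure {X : STS S A} {bar : A → A}
    (hCE : X.CE) (hEL : X.EL) (hLI : X.LabelsIn)
    (hset : ∀ s (α : Multiset A) s', X.tr s α s' → α.Nodup)
    (hg : X.GoodRev bar) (s : S) (γ : Multiset A) (s' : S) :
    (X.revSTS bar).tr s γ s' ↔ (X.mixrevSTS bar).tr s γ s' ∧ Pure X bar γ := by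
  constructor
  · rintro (h | ⟨α, rfl, h⟩)
    · refine ⟨⟨s, 0, γ, by simp, ⟨s', by simpa using h⟩, hEL s, h⟩, ?_⟩
      intro a ha b hb
      have hnd : γ.Nodup := hset _ _ _ h
      have h1 : γ.count a ≤ 1 := Multiset.nodup_iff_count_le_one.mp hnd a
      have h2 : γ.count (bar b) = 0 := by
        apply Multiset.count_eq_zero_of_notMem
        intro hmem
        exact hg.2 b hb (hLI _ _ _ h _ hmem)
      omega
    · refine ⟨⟨s', α, 0, by simp, ⟨s, by simpa using h⟩, h, hEL s'⟩, ?_⟩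
      intro a ha b hb
      have h1 : (Multiset.map bar α).count a = 0 := by
        apply Multiset.count_eq_zero_of_notMem
        intro hmem
        obtain ⟨c, hc, hce⟩ := Multiset.mem_map.mp hmem
        exact hg.2 c (hLI _ _ _ h _ hc) (hce ▸ ha)
      have hnd : (Multiset.map bar α).Nodup := by
        refine Multiset.Nodup.map_on ?_ (hset _ _ _ h)
        intro x hx y hy hxy
        exact hg.1 (hLI _ _ _ h _ hx) (hLI _ _ _ h _ hy) hxy
      have h2 : (Multiset.map bar α).count (bar b) ≤ 1 :=
        Multiset.nodup_iff_count_le_one.mp hnd _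
      omega
  · rintro ⟨⟨s0, α, β, rfl, ⟨w, hw⟩, hα, hβ⟩, hpure⟩
    by_cases hα0 : α = 0
    · subst hα0
      left
      have hs : s = s0 := zero_tr_eq hCE hα
      simpa [hs] using hβ
    · obtain ⟨a, ha⟩ := Multiset.exists_mem_of_ne_zero hα0
      have haT : a ∈ X.T := hLI _ _ _ hα a ha
      have hβ0 : β = 0 := by
        by_contra hβ0
        obtain ⟨b, hb⟩ := Multiset.exists_mem_of_ne_zero hβ0
        have hbT : b ∈ X.T := hLI _ _ _ hβ b hb
        have hp := hpure b hbT a haT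
        have h1 : 1 ≤ β.count b := Multiset.one_le_count_iff_mem.mpr hb
        have h2 : 1 ≤ (Multiset.map bar α).count (bar a) :=
          Multiset.one_le_count_iff_mem.mpr (Multiset.mem_map_of_mem bar ha)
        rw [Multiset.count_add, Multiset.count_add] at hp
        have h3 : (Multiset.map bar α).count b + β.count b ≥ 1 := by omega
        have h4 : (Multiset.map bar α).count (bar a) + β.count (bar a) ≥ 1 := by omega
        omega
      subst hβ0
      right
      have hs' : s' = s0 := zero_tr_eq hCE hβ
      exact ⟨α, by simp, hs' ▸ hα⟩

lemma sum_map_two_ite (γ : Multiset A) (x y : A) :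
    (γ.map fun c => (if c = x then 1 else 0) + (if c = y then 1 else 0)).sum
      = γ.count x + γ.count y := by
  induction γ using Multiset.induction with
  | empty => simp
  | cons c γ ih =>
    simp only [Multiset.map_cons, Multiset.sum_cons, ih, Multiset.count_cons]
    have : ∀ u v : A, (if u = v then (1:ℕ) else 0) = (if v = u then 1 else 0) := by
      intro u v; by_cases h : u = v <;> simp [h, Ne.symm, eq_comm]
    rw [this c x, this c y]; omega

/-- The net obtained from `N` by adding, for every ordered pair of actions of
`X`, a marked self-loop place that forbids firing `a` and `bar b` together. -/
def purify (X : STS S A) (bar : A → A) {n : ℕ} (N : PTNet (Fin n) A) :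
    PTNet (Fin n ⊕ ({a // a ∈ X.T} × {a // a ∈ X.T})) A where
  T := N.T
  pre p c := match p with
    | .inl p => N.pre p c
    | .inr (a, b) => (if c = a.1 then 1 else 0) + (if c = bar b.1 then 1 else 0)
  post c p := match p with
    | .inl p => N.post c p
    | .inr (a, b) => (if c = a.1 then 1 else 0) + (if c = bar b.1 then 1 else 0)
  M0 p := match p with | .inl p => N.M0 p | .inr _ => 1
  pre_pos a ha := by obtain ⟨p, hp⟩ := N.pre_pos a ha; exact ⟨.inl p, hp⟩

/-- Lift a marking of `N` to a marking of `purify X bar N`. -/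
def liftM (X : STS S A) (bar : A → A) {n : ℕ}
    (M : Fin n → ℕ) : (Fin n ⊕ ({a // a ∈ X.T} × {a // a ∈ X.T})) → ℕ :=
  fun p => match p with | .inl p => M p | .inr _ => 1

lemma liftM_injective (X : STS S A) (bar : A → A) {n : ℕ} :
    Function.Injective (liftM (n := n) X bar) := by
  intro M1 M2 h
  funext p
  exact congrFun h (.inl p)

variable {X : STS S A} {bar : A → A} {n : ℕ} {N : PTNet (Fin n) A}

lemma PRE_purify_inl (γ : Multiset A) (p : Fin n) :
    (purify X bar N).PRE γ (.inl p) = N.PRE γ p := rfl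

lemma PRE_purify_inr (γ : Multiset A) (a b : {a // a ∈ X.T}) :
    (purify X bar N).PRE γ (.inr (a, b)) = γ.count a.1 + γ.count (bar b.1) :=
  sum_map_two_ite γ a.1 (bar b.1)

lemma POST_purify_inr (γ : Multiset A) (a b : {a // a ∈ X.T}) :
    (purify X bar N).POST γ (.inr (a, b)) = γ.count a.1 + γ.count (bar b.1) :=
  sum_map_two_ite γ a.1 (bar b.1)

lemma enabled_purify (M : Fin n → ℕ) (γ : Multiset A) :
    (purify X bar N).Enabled (liftM X bar M) γ ↔ N.Enabled M γ ∧ Pure X bar γ := by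
  constructor
  · rintro ⟨hmem, hpre⟩
    refine ⟨⟨hmem, fun p => hpre (.inl p)⟩, ?_⟩
    intro a ha b hb
    have := hpre (.inr (⟨a, ha⟩, ⟨b, hb⟩))
    rwa [PRE_purify_inr] at this
  · rintro ⟨⟨hmem, hpre⟩, hpure⟩
    refine ⟨hmem, fun p => ?_⟩
    match p with
    | .inl p => exact hpre p
    | .inr (a, b) => rw [PRE_purify_inr]; exact hpure a.1 a.2 b.1 b.2

lemma fire_purify (M : Fin n → ℕ) (γ : Multiset A)
    (h : (purify X bar N).Enabled (liftM X bar M) γ) :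
    (purify X bar N).fire (liftM X bar M) γ = liftM X bar (N.fire M γ) := by
  funext p
  match p with
  | .inl p => rfl
  | .inr (a, b) =>
    have hle := h.2 (.inr (a, b))
    rw [PRE_purify_inr] at hle
    show liftM X bar M _ - (purify X bar N).PRE γ _ + (purify X bar N).POST γ _ = 1
    rw [PRE_purify_inr, POST_purify_inr]
    simp only [liftM] at hle ⊢
    omega

lemma reach_purify {M'' : (Fin n ⊕ ({a // a ∈ X.T} × {a // a ∈ X.T})) → ℕ}
    (h : (purify X bar N).Reach M'') :
    ∃ M, N.Reach M ∧ M'' = liftM X bar M := by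
  induction h with
  | init => exact ⟨N.M0, PTNet.Reach.init, by funext p; match p with | .inl p => rfl | .inr _ => rfl⟩
  | @step Mc γ _ hen ih =>
    obtain ⟨M, hM, rfl⟩ := ih
    exact ⟨N.fire M γ, hM.step ((enabled_purify M γ).mp hen).1, fire_purify M γ hen⟩

/-- Transport solvability along a bijection of the (finite) set of places. -/
lemma solvable_of_iso {S' : Type*} {P : Type*} [Fintype P] {Z : STS S' A} (N : PTNet P A)
    (h : STS.IsoSTS Z (CRG N)) : STSSolvable Z := by
  classical
  obtain ⟨ψ, hinit, hT, htr⟩ := h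
  set m := Fintype.card P with hm
  set e : P ≃ Fin m := Fintype.equivFin P with he
  set N₂ : PTNet (Fin m) A :=
    { T := N.T
      pre := fun q a => N.pre (e.symm q) a
      post := fun a q => N.post a (e.symm q)
      M0 := fun q => N.M0 (e.symm q)
      pre_pos := fun a ha => by
        obtain ⟨p, hp⟩ := N.pre_pos a ha
        exact ⟨e p, by simpa using hp⟩ } with hN₂
  have hPRE : ∀ (γ : Multiset A) q, N₂.PRE γ q = N.PRE γ (e.symm q) := fun _ _ => rfl
  have hen : ∀ (M : P → ℕ) γ, N₂.Enabled (fun q => M (e.symm q)) γ ↔ N.Enabled M γ := by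
    intro M γ
    constructor
    · rintro ⟨h1, h2⟩
      refine ⟨h1, fun p => ?_⟩
      have := h2 (e p)
      simpa [hPRE] using this
    · rintro ⟨h1, h2⟩
      exact ⟨h1, fun q => h2 (e.symm q)⟩
  have hfire : ∀ (M : P → ℕ) γ,
      N₂.fire (fun q => M (e.symm q)) γ = fun q => N.fire M γ (e.symm q) := fun _ _ => rfl
  have r1 : ∀ {M : P → ℕ}, N.Reach M → N₂.Reach (fun q => M (e.symm q)) := by
    intro M h
    induction h with
    | init => exact PTNet.Reach.init
    | @step Mc γ _ hen2 ih =>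
      have := ih.step ((hen Mc γ).mpr hen2)
      rwa [hfire] at this
  have r2 : ∀ {M' : Fin m → ℕ}, N₂.Reach M' → ∃ M, N.Reach M ∧ M' = fun q => M (e.symm q) := by
    intro M' h
    induction h with
    | init => exact ⟨N.M0, PTNet.Reach.init, rfl⟩
    | @step Mc γ _ hen2 ih =>
      obtain ⟨M, hM, rfl⟩ := ih
      exact ⟨N.fire M γ, hM.step ((hen M γ).mp hen2), hfire M γ⟩
  set ψ2 : {M : P → ℕ // N.Reach M} ≃ {M' : Fin m → ℕ // N₂.Reach M'} :=
    { toFun := fun M => ⟨fun q => M.1 (e.symm q), r1 M.2⟩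
      invFun := fun M' => ⟨fun p => M'.1 (e p), by
        obtain ⟨M, hM, h'⟩ := r2 M'.2
        have : (fun p => M'.1 (e p)) = M := by funext p; rw [h']; simp
        rw [this]; exact hM⟩
      left_inv := fun M => by apply Subtype.ext; funext p; simp
      right_inv := fun M' => by apply Subtype.ext; funext q; simp } with hψ2
  refine ⟨m, N₂, ψ.trans ψ2, ?_, hT, ?_⟩
  · simp only [Equiv.trans_apply, hinit]
    apply Subtype.ext
    rfl
  · intro s γ s'
    rw [htr s γ s']
    show _ ↔ (CRG N₂).tr (ψ2 (ψ s)) γ (ψ2 (ψ s'))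
    constructor
    · rintro ⟨h1, h2⟩
      refine ⟨(hen _ γ).mpr h1, ?_⟩
      show (fun q => (ψ s').1 (e.symm q)) = N₂.fire (fun q => (ψ s).1 (e.symm q)) γ
      rw [hfire, h2]
    · rintro ⟨h1, h2⟩
      refine ⟨(hen _ γ).mp h1, ?_⟩
      have h2' : (fun q => (ψ s').1 (e.symm q)) = fun q => N.fire (ψ s).1 γ (e.symm q) := h2
      funext p
      have := congrFun h2' (e p)
      simpa using this

end Stmt10Aux


/-- For a set CEST-system, solvability of `TS^mixrev` implies solvability of
`TS^rev`. -/
theorem stmt10 {S A : Type*} [DecidableEq A] (X : STS S A) (bar : A → A)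
    (hX : X.IsCEST)
    (hset : ∀ s (α : Multiset A) s', X.tr s α s' → α.Nodup)
    (hg : X.GoodRev bar)
    (hsol : STSSolvable (X.mixrevSTS bar)) :
    STSSolvable (X.revSTS bar) := by
  classical
  obtain ⟨hLI, hCE, hREA, hEL, hSEQ⟩ := hX
  obtain ⟨n, N, ψ, hinit, hT, htr⟩ := hsol
  set N' := Stmt10Aux.purify X bar N with hN'
  have hrev_iff := Stmt10Aux.rev_iff_mixrev_pure hCE hEL hLI hset hg
  have hinit1 : (ψ X.init).1 = N.M0 := congrArg Subtype.val hinit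
  have reachF : ∀ s : S, N'.Reach (Stmt10Aux.liftM X bar (ψ s).1) := by
    intro s
    induction hREA s with
    | refl =>
      have hM0 : Stmt10Aux.liftM X bar (ψ X.init).1 = N'.M0 := by
        rw [hinit1]; funext p; cases p <;> rfl
      rw [hM0]; exact PTNet.Reach.init
    | @step r r' α hr htr2 ih =>
      obtain ⟨hmix, hpure⟩ := (hrev_iff r α r').mp (Or.inl htr2)
      obtain ⟨hen, heq⟩ := (htr r α r').mp hmix
      have hen' : N'.Enabled (Stmt10Aux.liftM X bar (ψ r).1) α :=
        (Stmt10Aux.enabled_purify _ _).mpr ⟨hen, hpure⟩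
      have hstep := PTNet.Reach.step ih hen'
      rwa [Stmt10Aux.fire_purify _ _ hen', ← heq] at hstep
  have hbij : Function.Bijective
      (fun s : S => (⟨Stmt10Aux.liftM X bar (ψ s).1, reachF s⟩ : {M // N'.Reach M})) := by
    constructor
    · intro s1 s2 h
      have h1 := congrArg Subtype.val h
      exact ψ.injective (Subtype.ext (Stmt10Aux.liftM_injective X bar h1))
    · rintro ⟨M'', hM''⟩
      obtain ⟨M, hM, rfl⟩ := Stmt10Aux.reach_purify hM''
      obtain ⟨s, hs⟩ := ψ.surjective ⟨M, hM⟩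
      exact ⟨s, by simp [hs]⟩
  refine Stmt10Aux.solvable_of_iso N' ⟨Equiv.ofBijective _ hbij, ?_, hT, ?_⟩
  · apply Subtype.ext
    show Stmt10Aux.liftM X bar (ψ X.init).1 = N'.M0
    rw [hinit1]; funext p; cases p <;> rfl
  · intro s γ s'
    rw [hrev_iff s γ s', htr s γ s']
    constructor
    · rintro ⟨⟨hen, heq⟩, hpure⟩
      have hen' : N'.Enabled (Stmt10Aux.liftM X bar (ψ s).1) γ :=
        (Stmt10Aux.enabled_purify _ _).mpr ⟨hen, hpure⟩
      refine ⟨hen', ?_⟩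
      show Stmt10Aux.liftM X bar (ψ s').1 = N'.fire (Stmt10Aux.liftM X bar (ψ s).1) γ
      rw [Stmt10Aux.fire_purify _ _ hen', heq]
    · rintro ⟨hen', heq'⟩
      obtain ⟨hen, hpure⟩ := (Stmt10Aux.enabled_purify _ _).mp hen'
      refine ⟨⟨hen, ?_⟩, hpure⟩
      have heq'' : Stmt10Aux.liftM X bar (ψ s').1
          = Stmt10Aux.liftM X bar (N.fire (ψ s).1 γ) := by
        have : Stmt10Aux.liftM X bar (ψ s').1
            = N'.fire (Stmt10Aux.liftM X bar (ψ s).1) γ := heq'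
        rw [this, Stmt10Aux.fire_purify _ _ hen']
      exact Stmt10Aux.liftM_injective X bar heq''
end

section
/- Let TS=(S,T,→,s₀) be a CEST-system, R a home cover of TS, and for r ∈ R let TS̄_r=(S_r,T̄,→_r,r) be the restriction of the reversed system TS̄ to S_r, the set of states of TS from which r is reachable. Then: (1) TS̄_r is a CEST-system for every r ∈ R; (2) for every r ∈ R, every state in S_r is reachable from s₀ in TS; (3) S = ⋃_{r∈R} S_r. -/
namespace STSAux

open STS

variable {S A : Type*}

theorem reach_trans {X : STS S A} {a b c : S}
    (h1 : X.ReachFrom a b) (h2 : X.ReachFrom b c) : X.ReachFrom a c := by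
  induction h2 with
  | refl => exact h1
  | step h ht ih => exact ReachFrom.step ih ht

theorem map_add_split {α β : Type*} (f : α → β) :
    ∀ (γ δ : Multiset β) (m : Multiset α), γ + δ = Multiset.map f m →
      ∃ m₁ m₂, m = m₁ + m₂ ∧ γ = Multiset.map f m₁ ∧ δ = Multiset.map f m₂ := by
  intro γ
  induction γ using Multiset.induction_on with
  | empty =>
    intro δ m h
    exact ⟨0, m, by simp, by simp, by simpa using h⟩
  | cons b γ ih =>
    intro δ m h
    have hb : b ∈ Multiset.map f m := by
      rw [← h]; exact Multiset.mem_add.2 (Or.inl (Multiset.mem_cons_self _ _))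
    obtain ⟨a, ham, hfa⟩ := Multiset.mem_map.1 hb
    obtain ⟨m', rfl⟩ := Multiset.exists_cons_of_mem ham
    have h' : γ + δ = Multiset.map f m' := by
      have : b ::ₘ (γ + δ) = f a ::ₘ Multiset.map f m' := by
        simpa [Multiset.cons_add] using h
      rw [← hfa] at this
      exact (Multiset.cons_inj_right _).1 this
    obtain ⟨m₁, m₂, rfl, hγ, hδ⟩ := ih δ m' h'
    exact ⟨a ::ₘ m₁, m₂, by simp [Multiset.cons_add], by simp [hγ, hfa], hδ⟩

end STSAux

/-- Properties of the reversed restricted systems `TS̄_r` for a home cover `R`. -/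
theorem stmt11 {S A : Type*} [DecidableEq A] (X : STS S A) (bar : A → A)
    (hX : X.IsCEST) (hg : X.GoodRev bar)
    (R : Set S) (hR : ∀ s, ∃ r ∈ R, X.ReachFrom s r) :
    (∀ r ∈ R, (X.revRestrict bar r).IsCEST) ∧
    (∀ r ∈ R, ∀ s : S, X.ReachFrom s r → X.ReachFrom X.init s) ∧
    (∀ s : S, ∃ r ∈ R, X.ReachFrom s r) := by
  obtain ⟨hLab, hCE, hREA, hEL, hSEQ⟩ := hX
  refine ⟨?_, fun r _ s _ => hREA s, hR⟩
  intro r _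
  set Y := X.revRestrict bar r with hY
  -- translation of signatures
  set G : (A → ℤ) → (A → ℤ) := fun v a => if a ∈ X.T then -(v (bar a)) else 0 with hG
  have countbar : ∀ (α : Multiset A), (∀ a ∈ α, a ∈ X.T) → ∀ a ∈ X.T,
      Multiset.count (bar a) (Multiset.map bar α) = Multiset.count a α := by
    intro α
    induction α using Multiset.induction_on with
    | empty => intro _ a _; simp
    | cons c α ih =>
      intro hα a ha
      have hc : c ∈ X.T := hα c (Multiset.mem_cons_self _ _)
      have h1 := ih (fun b hb => hα b (Multiset.mem_cons_of_mem hb)) a ha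
      rw [Multiset.map_cons, Multiset.count_cons, Multiset.count_cons, h1]
      congr 1
      by_cases h : a = c
      · simp [h]
      · have hne : bar a ≠ bar c := fun he => h (hg.1 ha hc he)
        simp [h, hne]
  have Gadd : ∀ v w : A → ℤ, G (v + w) = G v + G w := by
    intro v w; funext a
    by_cases h : a ∈ X.T <;> simp [hG, h] <;> ring
  have Gsub : ∀ v w : A → ℤ, G (v - w) = G v - G w := by
    intro v w; funext a
    by_cases h : a ∈ X.T <;> simp [hG, h] <;> ring
  have G0 : G 0 = 0 := by funext a; by_cases h : a ∈ X.T <;> simp [hG, h]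
  have Gstep : ∀ (α : Multiset A), (∀ a ∈ α, a ∈ X.T) →
      G (STS.stepVec (Multiset.map bar α)) = - STS.stepVec α := by
    intro α hα; funext a
    by_cases h : a ∈ X.T
    · simp [hG, h, STS.stepVec, countbar α hα a h]
    · have : a ∉ α := fun hmem => h (hα a hmem)
      simp [hG, h, STS.stepVec, Multiset.count_eq_zero.2 this]
  -- transfer of undirected paths from Y to X
  have transfer : ∀ (s u : {s : S // X.ReachFrom s r}) (v : A → ℤ),
      STS.PathSig Y s u v → STS.PathSig X s.1 u.1 (G v) := by
    intro s u v h
    induction h with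
    | nil => rw [G0]; exact STS.PathSig.nil _
    | @fwd p q γ v₀ h htr ih =>
      obtain ⟨β, rfl, hβ⟩ := htr
      have hT : ∀ a ∈ β, a ∈ X.T := fun a ha => hLab _ _ _ hβ a ha
      have heq : G (v₀ + STS.stepVec (Multiset.map bar β)) = G v₀ - STS.stepVec β := by
        rw [Gadd, Gstep β hT]; ring
      rw [heq]
      exact STS.PathSig.bwd ih hβ
    | @bwd p q γ v₀ h htr ih =>
      obtain ⟨β, rfl, hβ⟩ := htr
      have hT : ∀ a ∈ β, a ∈ X.T := fun a ha => hLab _ _ _ hβ a ha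
      have heq : G (v₀ - STS.stepVec (Multiset.map bar β)) = G v₀ + STS.stepVec β := by
        rw [Gsub, Gstep β hT]; ring
      rw [heq]
      exact STS.PathSig.fwd ih hβ
  have btransfer : ∀ v w : A → ℤ, STS.Bowtie Y v w → STS.Bowtie X (G v) (G w) := by
    intro v w h
    induction h with
    | base h1 h2 => exact STS.Bowtie.base (transfer _ _ _ h1) (transfer _ _ _ h2)
    | refl v => exact STS.Bowtie.refl _
    | symm _ ih => exact STS.Bowtie.symm ih
    | trans _ _ ih1 ih2 => exact STS.Bowtie.trans ih1 ih2
    | add _ _ ih1 ih2 => rw [Gadd, Gadd]; exact STS.Bowtie.add ih1 ih2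
  refine ⟨?_, ?_, ?_, ?_, ?_⟩
  · -- LabelsIn
    intro s γ s' htr a ha
    obtain ⟨α, rfl, hα⟩ := htr
    obtain ⟨b, hb, rfl⟩ := Multiset.mem_map.1 ha
    exact Finset.mem_image.2 ⟨b, hLab _ _ _ hα b hb, rfl⟩
  · -- CE
    intro s u u' v w hp hq hb
    exact Subtype.ext (hCE s.1 u.1 u'.1 _ _ (transfer _ _ _ hp) (transfer _ _ _ hq)
      (btransfer _ _ hb))
  · -- REA
    have revreach : ∀ u v, X.ReachFrom u v → ∀ (hv : X.ReachFrom v r)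
        (hu : X.ReachFrom u r), Y.ReachFrom ⟨v, hv⟩ ⟨u, hu⟩ := by
      intro u v h
      induction h with
      | refl => intro hv hu; exact STS.ReachFrom.refl _
      | @step m v' α h htr ih =>
        intro hv hu
        have hm : X.ReachFrom m r :=
          STSAux.reach_trans (STS.ReachFrom.step (STS.ReachFrom.refl m) htr) hv
        have edge : Y.tr ⟨v', hv⟩ (Multiset.map bar α) ⟨m, hm⟩ := ⟨α, rfl, htr⟩
        exact STSAux.reach_trans
          (STS.ReachFrom.step (STS.ReachFrom.refl _) edge) (ih hm hu)
    intro u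
    exact revreach u.1 r u.2 (STS.ReachFrom.refl r) u.2
  · -- EL
    intro s
    exact ⟨0, by simp, hEL s.1⟩
  · -- SEQ
    intro s γ δ ⟨s'', htr⟩
    obtain ⟨α, hγδ, hα⟩ := htr
    obtain ⟨m₁, m₂, rfl, hγ, hδ⟩ := STSAux.map_add_split bar γ δ α hγδ
    have hα' : X.tr s''.1 (m₂ + m₁) s.1 := by rwa [add_comm m₂ m₁]
    obtain ⟨t, ht2, u, hu⟩ := hSEQ s''.1 m₂ m₁ ⟨s.1, hα'⟩
    -- show u = s.1 using CE
    have p1 : STS.PathSig X s''.1 s.1 (0 + STS.stepVec (m₂ + m₁)) :=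
      STS.PathSig.fwd (STS.PathSig.nil _) hα'
    have p2 : STS.PathSig X s''.1 u (0 + STS.stepVec m₂ + STS.stepVec m₁) :=
      STS.PathSig.fwd (STS.PathSig.fwd (STS.PathSig.nil _) ht2) hu
    have hveq : (0 + STS.stepVec (m₂ + m₁) : A → ℤ)
        = 0 + STS.stepVec m₂ + STS.stepVec m₁ := by
      funext a; simp [STS.stepVec]
    have heq : s.1 = u := hCE s''.1 s.1 u _ _ p1 p2 (hveq ▸ STS.Bowtie.refl _)
    subst heq
    have htreach : X.ReachFrom t r :=
      STSAux.reach_trans (STS.ReachFrom.step (STS.ReachFrom.refl t) hu) s.2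
    exact ⟨⟨t, htreach⟩, ⟨m₁, hγ, hu⟩, s'', ⟨m₂, hδ, ht2⟩⟩
end

section
/- Let TS=(S,T,→,s₀) be a CEST-system and R a home cover of TS, and let TS̄=(S,T̄,{(s',ᾱ,s) : s –α→ s'},R) be the reversed step transition system with multiple initial states R. Then TS^mixrev is solvable if and only if both TS and TS̄ are solvable. -/
/-!
A solution of `TS^mixrev` is an injective marking map along which transitions are exactly
firings. Restricting the net to the actions `T`, resp. `T̄`, solves `TS` and every `TS̄_r`, since
the transitions of `TS^mixrev` labelled in `T`, resp. `T̄`, are exactly those of `TS`, resp. `TS̄`.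

Conversely, let `N₁` solve `TS` and `N₂` solve `TS̄` (the solutions of the `TS̄_r` glue to one
marking map, as `R` is a home cover). On the disjoint union of their places let `a ∈ T` act on
`N₂` as the reverse of `ā`, and `ā` act on `N₁` as the reverse of `a`. With `w = s ⊕ (α + β)`,
the step `ᾱ + β` at `s ⊕ α` undoes `α` and does `β` on `N₁`, and undoes `β̄` and does `ᾱ` on `N₂`
(CE gives `s ⊕ α –β→ w`). So it is enabled iff `α + β` is enabled at `s`, and leads to `s ⊕ β`.
-/

open Function

namespace STS

variable {S A : Type*} {X : STS S A}

theorem ReachFrom.trans {a b c : S} (hab : X.ReachFrom a b) (hbc : X.ReachFrom b c) :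
    X.ReachFrom a c := by
  induction hbc with
  | refl => exact hab
  | step _ htr ih => exact ih.step htr

theorem ReachFrom.head {a b c : S} {α : Multiset A} (hab : X.tr a α b) (hbc : X.ReachFrom b c) :
    X.ReachFrom a c :=
  ((ReachFrom.refl a).step hab).trans hbc

theorem ReachFrom.mono {Y : STS S A} (hXY : ∀ s α s', X.tr s α s' → Y.tr s α s') {a b : S}
    (hab : X.ReachFrom a b) : Y.ReachFrom a b := by
  induction hab with
  | refl => exact .refl _
  | step _ htr ih => exact ih.step (hXY _ _ _ htr)

/-- The paper's `TS̄`, with a placeholder initial state. -/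
def reversed [DecidableEq A] (X : STS S A) (bar : A → A) : STS S A where
  T := X.T.image bar
  tr u γ v := ∃ α : Multiset A, γ = Multiset.map bar α ∧ X.tr v α u
  init := X.init

section CEST

variable [DecidableEq A]

theorem CE.tr_unique (hCE : X.CE) {s s₁ s₂ : S} {α : Multiset A} (h₁ : X.tr s α s₁)
    (h₂ : X.tr s α s₂) : s₁ = s₂ :=
  hCE s s₁ s₂ _ _ ((PathSig.nil s).fwd h₁) ((PathSig.nil s).fwd h₂) (.refl _)

theorem CE.eq_of_tr_zero (hCE : X.CE) (hEL : X.EL) {s s' : S} (h : X.tr s 0 s') : s' = s :=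
  hCE.tr_unique h (hEL s)

theorem CE.tr_of_tr_add (hCE : X.CE) (hSEQ : X.SEQ) {s u w : S} {α β : Multiset A}
    (hw : X.tr s (α + β) w) (hu : X.tr s α u) : X.tr u β w := by
  obtain ⟨u', hu', w', hw'⟩ := hSEQ s α β ⟨w, hw⟩
  obtain rfl := hCE.tr_unique hu' hu
  have hsig : stepVec (α + β) = stepVec α + stepVec β := by
    funext a
    simp [stepVec]
  obtain rfl : w = w' :=
    hCE s w w' _ _ ((PathSig.nil s).fwd hw) (((PathSig.nil s).fwd hu').fwd hw')
      (by rw [hsig, add_assoc]; exact .refl _)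
  exact hw'

end CEST

end STS

namespace PTNet

variable {P Q A : Type*} (N : PTNet P A)

theorem PRE_add (α β : Multiset A) (p : P) : N.PRE (α + β) p = N.PRE α p + N.PRE β p := by
  simp [PRE]

/-- After firing `α`, the mixed step "undo `α`, then fire `β`" is enabled iff `α + β` was. -/
theorem post_add_pre_le_fire_iff {M : P → ℕ} {α β : Multiset A} {p : P} (hα : N.PRE α p ≤ M p) :
    N.POST α p + N.PRE β p ≤ N.fire M α p ↔ N.PRE (α + β) p ≤ M p := by
  rw [PRE_add]
  unfold fire
  omega

theorem fire_eq_fire_sub_add {M : P → ℕ} {α β : Multiset A} {p : P}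
    (h : N.PRE (α + β) p ≤ M p) :
    N.fire M β p = N.fire M α p - (N.POST α p + N.PRE β p) + (N.PRE α p + N.POST β p) := by
  rw [PRE_add] at h
  unfold fire
  omega

theorem enabled_restrict [DecidableEq A] (T' : Finset A) {M : P → ℕ} {α : Multiset A} :
    (N.restrict T').Enabled M α ↔ N.Enabled M α ∧ ∀ a ∈ α, a ∈ T' := by
  simp only [Enabled, restrict, Finset.mem_inter, PRE]
  grind

def relabel (e : P ≃ Q) : PTNet Q A where
  T := N.T
  pre q a := N.pre (e.symm q) a
  post a q := N.post a (e.symm q)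
  M0 := N.M0 ∘ e.symm
  pre_pos a ha := by
    obtain ⟨p, hp⟩ := N.pre_pos a ha
    exact ⟨e p, by simpa using hp⟩

theorem enabled_relabel (e : P ≃ Q) {M : P → ℕ} {α : Multiset A} :
    (N.relabel e).Enabled (M ∘ e.symm) α ↔ N.Enabled M α := by
  simp only [Enabled, relabel, PRE, comp_apply, e.symm.forall_congr_left, Equiv.symm_symm,
    Equiv.symm_apply_apply]

theorem fire_relabel (e : P ≃ Q) (M : P → ℕ) (α : Multiset A) :
    (N.relabel e).fire (M ∘ e.symm) α = N.fire M α ∘ e.symm :=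
  rfl

def toUPTNet : UPTNet P A := ⟨N.T, N.pre, N.post, N.pre_pos⟩

end PTNet

section FiringMap

variable {S P Q A : Type*}

structure IsFiringMap (X : STS S A) (N : PTNet P A) (μ : S → P → ℕ) : Prop where
  fires : ∀ {s α s'}, X.tr s α s' → N.Enabled (μ s) α ∧ μ s' = N.fire (μ s) α
  exists_tr : ∀ {s α}, N.Enabled (μ s) α → ∃ s', X.tr s α s'

structure IsSolution (X : STS S A) (N : PTNet P A) (μ : S → P → ℕ) : Prop
    extends IsFiringMap X N μ where
  injective : Injective μ
  map_init : μ X.init = N.M0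
  T_eq : X.T = N.T

variable {X : STS S A} {N : PTNet P A} {μ : S → P → ℕ}

theorem IsFiringMap.of_equiv (e : S ≃ {M // N.Reach M}) (he : ∀ s, (e s).1 = μ s)
    (htr : ∀ s α s', X.tr s α s' ↔ (CRG N).tr (e s) α (e s')) : IsFiringMap X N μ where
  fires {s α s'} h := by simpa only [CRG, he] using (htr s α s').1 h
  exists_tr {s α} hen := by
    have hen' : N.Enabled (e s).1 α := by rwa [he]
    obtain ⟨s', hs'⟩ := e.surjective ⟨_, (e s).2.step hen'⟩
    exact ⟨s', (htr s α s').2 ⟨hen', congrArg Subtype.val hs'⟩⟩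

theorem IsFiringMap.relabel (hF : IsFiringMap X N μ) (e : P ≃ Q) :
    IsFiringMap X (N.relabel e) fun s => μ s ∘ e.symm where
  fires h := by
    rw [N.enabled_relabel, N.fire_relabel, (hF.fires h).2]
    exact ⟨(hF.fires h).1, rfl⟩
  exists_tr hen := hF.exists_tr ((N.enabled_relabel e).1 hen)

theorem IsFiringMap.restrict [DecidableEq A] {Y : STS S A} (hF : IsFiringMap Y N μ)
    (T' : Finset A) (hXY : ∀ s γ s', X.tr s γ s' ↔ Y.tr s γ s' ∧ ∀ c ∈ γ, c ∈ T') :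
    IsFiringMap X (N.restrict T') μ where
  fires h := by
    obtain ⟨hY, hT'⟩ := (hXY _ _ _).1 h
    exact ⟨(N.enabled_restrict T').2 ⟨(hF.fires hY).1, hT'⟩, (hF.fires hY).2⟩
  exists_tr hen := by
    obtain ⟨hen, hT'⟩ := (N.enabled_restrict T').1 hen
    obtain ⟨s', hs'⟩ := hF.exists_tr hen
    exact ⟨s', (hXY _ _ _).2 ⟨hs', hT'⟩⟩

theorem IsFiringMap.reach_iff (hF : IsFiringMap X N μ) (hinit : μ X.init = N.M0) (hrea : X.REA)
    (M : P → ℕ) : N.Reach M ↔ ∃ s, μ s = M := by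
  constructor
  · intro hM
    induction hM with
    | init => exact ⟨X.init, hinit⟩
    | step _ hen ih =>
      obtain ⟨s, rfl⟩ := ih
      obtain ⟨s', hs'⟩ := hF.exists_tr hen
      exact ⟨s', (hF.fires hs').2⟩
  · rintro ⟨s, rfl⟩
    induction hrea s with
    | refl => exact hinit ▸ .init
    | step _ htr ih => exact (hF.fires htr).2 ▸ ih.step (hF.fires htr).1

theorem IsSolution.exists_equiv (h : IsSolution X N μ) (hrea : X.REA) :
    ∃ e : S ≃ {M // N.Reach M}, (∀ s, (e s).1 = μ s) ∧
      ∀ s α s', X.tr s α s' ↔ (CRG N).tr (e s) α (e s') := by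
  refine ⟨(Equiv.ofInjective μ h.injective).trans (Equiv.subtypeEquivRight fun M =>
    (h.reach_iff h.map_init hrea M).symm), fun s => rfl, fun s α s' => ⟨h.fires, ?_⟩⟩
  rintro ⟨hen, hfire⟩
  obtain ⟨s'', hs''⟩ := h.exists_tr hen
  obtain rfl : s'' = s' := h.injective ((h.fires hs'').2.trans hfire.symm)
  exact hs''

theorem IsSolution.relabel (h : IsSolution X N μ) (e : P ≃ Q) :
    IsSolution X (N.relabel e) fun s => μ s ∘ e.symm where
  toIsFiringMap := h.toIsFiringMap.relabel e
  injective := e.symm.surjective.injective_comp_right.comp h.injective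
  map_init := by rw [h.map_init]; rfl
  T_eq := h.T_eq

theorem IsSolution.stsSolvable [Finite P] (h : IsSolution X N μ) (hrea : X.REA) :
    STSSolvable X := by
  obtain ⟨n, ⟨e⟩⟩ := Finite.exists_equiv_fin P
  have h' := h.relabel e
  obtain ⟨φ, hφ, htr⟩ := h'.exists_equiv hrea
  exact ⟨n, N.relabel e, φ, Subtype.ext ((hφ _).trans h'.map_init), h'.T_eq, htr⟩

theorem STSSolvable.exists_isSolution (h : STSSolvable X) :
    ∃ (n : ℕ) (N : PTNet (Fin n) A) (μ : S → Fin n → ℕ), IsSolution X N μ := by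
  obtain ⟨n, N, ψ, hinit, hT, htr⟩ := h
  exact ⟨n, N, fun s => (ψ s).1,
    { toIsFiringMap := .of_equiv ψ (fun _ => rfl) htr
      injective := Subtype.val_injective.comp ψ.injective
      map_init := congrArg Subtype.val hinit
      T_eq := hT }⟩

end FiringMap

namespace STS

variable {S A : Type*} [DecidableEq A] {X : STS S A} {bar : A → A}

theorem revRestrict_REA (r : S) : (X.revRestrict bar r).REA := by
  have key : ∀ {s t : S} (hst : X.ReachFrom s t) (htr : X.ReachFrom t r),
      (X.revRestrict bar r).ReachFrom ⟨t, htr⟩ ⟨s, hst.trans htr⟩ := by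
    intro s t hst
    induction hst with
    | refl => exact fun _ => .refl _
    | @step t t' α _ h ih =>
      intro htr
      have hrev : (X.revRestrict bar r).tr ⟨t', htr⟩ (α.map bar) ⟨t, ReachFrom.head h htr⟩ :=
        ⟨α, rfl, h⟩
      exact ((ReachFrom.refl _).step hrev).trans (ih _)
  exact fun s => key s.2 (.refl r)

theorem mixrevSTS_tr_of_tr (hEL : X.EL) {s s' : S} {γ : Multiset A} (h : X.tr s γ s') :
    (X.mixrevSTS bar).tr s γ s' :=
  ⟨s, 0, γ, by simp, ⟨s', by simpa using h⟩, hEL s, h⟩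

theorem mixrevSTS_tr_of_reversed_tr (hEL : X.EL) {u v : S} {γ : Multiset A}
    (h : (X.reversed bar).tr u γ v) : (X.mixrevSTS bar).tr u γ v := by
  obtain ⟨α, rfl, h⟩ := h
  exact ⟨v, α, 0, by simp, ⟨u, by simpa using h⟩, h, hEL v⟩

theorem mixrevSTS_REA (hREA : X.REA) (hEL : X.EL) : (X.mixrevSTS bar).REA :=
  fun s => (hREA s).mono fun _ _ _ => mixrevSTS_tr_of_tr hEL

theorem tr_iff_mixrevSTS_tr (hlab : X.LabelsIn) (hCE : X.CE) (hEL : X.EL)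
    (hdisj : ∀ a ∈ X.T, bar a ∉ X.T) (u : S) (γ : Multiset A) (v : S) :
    X.tr u γ v ↔ (X.mixrevSTS bar).tr u γ v ∧ ∀ c ∈ γ, c ∈ X.T := by
  refine ⟨fun h => ⟨mixrevSTS_tr_of_tr hEL h, hlab _ _ _ h⟩, ?_⟩
  rintro ⟨⟨s, α, β, rfl, -, hsu, hsv⟩, hγ⟩
  obtain rfl : α = 0 := Multiset.eq_zero_of_forall_notMem fun a ha =>
    hdisj a (hlab _ _ _ hsu a ha) (hγ _ (Multiset.mem_add.2 (.inl (Multiset.mem_map_of_mem _ ha))))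
  obtain rfl := hCE.eq_of_tr_zero hEL hsu
  simpa using hsv

theorem reversed_tr_iff_mixrevSTS_tr (hlab : X.LabelsIn) (hCE : X.CE) (hEL : X.EL)
    (hdisj : ∀ a ∈ X.T, bar a ∉ X.T) (u : S) (γ : Multiset A) (v : S) :
    (X.reversed bar).tr u γ v ↔ (X.mixrevSTS bar).tr u γ v ∧ ∀ c ∈ γ, c ∈ X.T.image bar := by
  constructor
  · intro h
    refine ⟨mixrevSTS_tr_of_reversed_tr hEL h, ?_⟩
    obtain ⟨α, rfl, h⟩ := h
    simpa using fun a ha => ⟨a, hlab _ _ _ h a ha, rfl⟩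
  · rintro ⟨⟨s, α, β, rfl, -, hsu, hsv⟩, hγ⟩
    obtain rfl : β = 0 := Multiset.eq_zero_of_forall_notMem fun b hb => by
      obtain ⟨a, ha, rfl⟩ := Finset.mem_image.1 (hγ b (Multiset.mem_add.2 (.inr hb)))
      exact hdisj a ha (hlab _ _ _ hsv _ hb)
    obtain rfl := hCE.eq_of_tr_zero hEL hsv
    exact ⟨α, by simp, hsu⟩

end STS

section Reversed

variable {S P A : Type*} [DecidableEq A] {X : STS S A} {bar : A → A}

open STS

theorem IsFiringMap.revRestrict {N : PTNet P A} {ψ : S → P → ℕ}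
    (hF : IsFiringMap (X.reversed bar) N ψ) (r : S) :
    IsFiringMap (X.revRestrict bar r) N fun s => ψ s.1 where
  fires h := hF.fires h
  exists_tr {s α} hen := by
    obtain ⟨s', α', rfl, h⟩ := hF.exists_tr hen
    exact ⟨⟨s', ReachFrom.head h s.2⟩, α', rfl, h⟩

/-- Every transition of `TS̄` lies in some `TS̄_r`. -/
theorem IsFiringMap.of_revRestrict {R : Set S} (hR : ∀ s, ∃ r ∈ R, X.ReachFrom s r)
    {U : UPTNet P A} {ψ : S → P → ℕ}
    (h : ∀ r ∈ R, IsFiringMap (X.revRestrict bar r) (U.withM (ψ r)) fun s => ψ s.1)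
    (M : P → ℕ) : IsFiringMap (X.reversed bar) (U.withM M) ψ where
  fires {u γ v} huv := by
    obtain ⟨r, hr, hur⟩ := hR u
    obtain ⟨α, rfl, hvu⟩ := huv
    exact (h r hr).fires (s := ⟨u, hur⟩) (s' := ⟨v, ReachFrom.head hvu hur⟩) ⟨α, rfl, hvu⟩
  exists_tr {u γ} hen := by
    obtain ⟨r, hr, hur⟩ := hR u
    obtain ⟨v, hv⟩ := (h r hr).exists_tr (s := ⟨u, hur⟩) hen
    exact ⟨v.1, hv⟩

theorem RevMultiSolvable.exists_isFiringMap {R : Set S} (hR : ∀ s, ∃ r ∈ R, X.ReachFrom s r)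
    (h : RevMultiSolvable X bar R) :
    ∃ (n : ℕ) (N : PTNet (Fin n) A) (ψ : S → Fin n → ℕ),
      N.T = X.T.image bar ∧ IsFiringMap (X.reversed bar) N ψ := by
  obtain ⟨n, U, ψ, hU⟩ := h
  obtain ⟨r₀, hr₀, -⟩ := hR X.init
  obtain ⟨-, -, hT, -⟩ := hU r₀ hr₀
  refine ⟨n, U.withM 0, ψ, hT.symm, .of_revRestrict hR (fun r hr => ?_) 0⟩
  obtain ⟨e, he, -, htr⟩ := hU r hr
  exact .of_equiv e he htr

theorem revMultiSolvable_of_isFiringMap {n : ℕ} {N : PTNet (Fin n) A} {ψ : S → Fin n → ℕ}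
    (hT : N.T = X.T.image bar) (hF : IsFiringMap (X.reversed bar) N ψ) (hinj : Injective ψ)
    (R : Set S) : RevMultiSolvable X bar R := by
  refine ⟨n, N.toUPTNet, ψ, fun r _ => ?_⟩
  have hsol : IsSolution (X.revRestrict bar r) (N.toUPTNet.withM (ψ r)) fun s => ψ s.1 :=
    { fires := (hF.revRestrict r).fires
      exists_tr := (hF.revRestrict r).exists_tr
      injective := hinj.comp Subtype.val_injective
      map_init := rfl
      T_eq := hT.symm }
  obtain ⟨e, he, htr⟩ := hsol.exists_equiv (revRestrict_REA r)
  exact ⟨e, he, hT.symm, htr⟩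

end Reversed

section Mixrev

variable {S P A : Type*} [DecidableEq A] {X : STS S A} {bar : A → A} {N : PTNet P A}
  {μ : S → P → ℕ}

open STS

theorem IsSolution.restrict_of_mixrevSTS (hlab : X.LabelsIn) (hCE : X.CE) (hEL : X.EL)
    (hdisj : ∀ a ∈ X.T, bar a ∉ X.T) (h : IsSolution (X.mixrevSTS bar) N μ) :
    IsSolution X (N.restrict X.T) μ where
  toIsFiringMap := h.restrict X.T (tr_iff_mixrevSTS_tr hlab hCE hEL hdisj)
  injective := h.injective
  map_init := h.map_init
  T_eq := (Finset.inter_eq_right.2 (h.T_eq ▸ Finset.subset_union_left)).symm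

theorem IsSolution.reversed_of_mixrevSTS (hlab : X.LabelsIn) (hCE : X.CE) (hEL : X.EL)
    (hdisj : ∀ a ∈ X.T, bar a ∉ X.T) (h : IsSolution (X.mixrevSTS bar) N μ) :
    (N.restrict (X.T.image bar)).T = X.T.image bar ∧
      IsFiringMap (X.reversed bar) (N.restrict (X.T.image bar)) μ :=
  ⟨Finset.inter_eq_right.2 (h.T_eq ▸ Finset.subset_union_right),
    h.restrict _ (reversed_tr_iff_mixrevSTS_tr hlab hCE hEL hdisj)⟩

end Mixrev

theorem exists_leftInvOn_of_injOn {A : Type*} {T : Set A} {bar : A → A} (h : Set.InjOn bar T) :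
    ∃ ib : A → A, Set.LeftInvOn ib bar T := by
  rcases isEmpty_or_nonempty A with hA | hA
  · exact ⟨id, fun a => isEmptyElim a⟩
  · exact ⟨_, h.leftInvOn_invFunOn⟩

section MixrevNet

variable {S P₁ P₂ A : Type*} [DecidableEq A]

theorem exists_eq_map_add_of_mem_union {T : Finset A} {bar ib : A → A}
    (hib : Set.LeftInvOn ib bar T) {γ : Multiset A} (hγ : ∀ c ∈ γ, c ∈ T ∪ T.image bar) :
    ∃ α β : Multiset A, (∀ a ∈ α, a ∈ T) ∧ (∀ b ∈ β, b ∈ T) ∧ γ = α.map bar + β := by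
  have hbar : ∀ c ∈ γ.filter (· ∉ T), ∃ a ∈ T, bar a = c := fun c hc => by
    obtain ⟨hcγ, hcT⟩ := Multiset.mem_filter.1 hc
    exact Finset.mem_image.1 ((Finset.mem_union.1 (hγ c hcγ)).resolve_left hcT)
  refine ⟨(γ.filter (· ∉ T)).map ib, γ.filter (· ∈ T), fun a ha => ?_,
    fun b hb => (Multiset.mem_filter.1 hb).2, ?_⟩
  · obtain ⟨c, hc, rfl⟩ := Multiset.mem_map.1 ha
    obtain ⟨a, haT, rfl⟩ := hbar c hc
    rwa [hib haT]
  · have hmap : ((γ.filter (· ∉ T)).map ib).map bar = γ.filter (· ∉ T) := by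
      rw [Multiset.map_map]
      conv_rhs => rw [← Multiset.map_id (γ.filter (· ∉ T))]
      refine Multiset.map_congr rfl fun c hc => ?_
      obtain ⟨a, ha, rfl⟩ := hbar c hc
      simp [hib ha]
    rw [hmap, add_comm, Multiset.filter_add_not]

theorem sum_map_ite_add {T : Finset A} (f h : A → ℕ) {γ β : Multiset A} (hγ : ∀ c ∈ γ, c ∉ T)
    (hβ : ∀ b ∈ β, b ∈ T) :
    ((γ + β).map fun c => if c ∈ T then f c else h c).sum = (γ.map h).sum + (β.map f).sum := by
  rw [Multiset.map_add, Multiset.sum_add, Multiset.map_congr rfl fun c hc => if_neg (hγ c hc),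
    Multiset.map_congr rfl fun b hb => if_pos (hβ b hb)]

/-- An action `a` of `N₁` acts on the places of `N₂` as the reverse of `bar a`, and an action `c`
of `N₂` acts on the places of `N₁` as the reverse of `ib c`, where `ib` is meant to be a left
inverse of `bar` on `N₁.T`. -/
def mixrevNet (N₁ : PTNet P₁ A) (N₂ : PTNet P₂ A) (bar ib : A → A) (M₀ : P₁ ⊕ P₂ → ℕ) :
    PTNet (P₁ ⊕ P₂) A where
  T := N₁.T ∪ N₂.T
  pre := Sum.elim (fun q c => if c ∈ N₁.T then N₁.pre q c else N₁.post (ib c) q)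
    (fun p c => if c ∈ N₁.T then N₂.post (bar c) p else N₂.pre p c)
  post c := Sum.elim (fun q => if c ∈ N₁.T then N₁.post c q else N₁.pre q (ib c))
    (fun p => if c ∈ N₁.T then N₂.pre p (bar c) else N₂.post c p)
  M0 := M₀
  pre_pos c hc := by
    by_cases h₁ : c ∈ N₁.T
    · obtain ⟨q, hq⟩ := N₁.pre_pos c h₁
      exact ⟨.inl q, by simpa [h₁] using hq⟩
    · obtain ⟨p, hp⟩ := N₂.pre_pos c ((Finset.mem_union.1 hc).resolve_left h₁)
      exact ⟨.inr p, by simpa [h₁] using hp⟩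

section Arcs

variable {N₁ : PTNet P₁ A} {N₂ : PTNet P₂ A} {bar ib : A → A} (M₀ : P₁ ⊕ P₂ → ℕ)
  {α β : Multiset A}

theorem mixrevNet_PRE_inl (hbar : ∀ a ∈ N₁.T, bar a ∉ N₁.T) (hib : Set.LeftInvOn ib bar N₁.T)
    (hα : ∀ a ∈ α, a ∈ N₁.T) (hβ : ∀ b ∈ β, b ∈ N₁.T) (q : P₁) :
    (mixrevNet N₁ N₂ bar ib M₀).PRE (α.map bar + β) (.inl q) = N₁.POST α q + N₁.PRE β q := by
  simp only [PTNet.PRE, mixrevNet, Sum.elim_inl]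
  rw [sum_map_ite_add _ _ (by simpa using fun a ha => hbar a (hα a ha)) hβ, Multiset.map_map]
  congr 2
  exact Multiset.map_congr rfl fun a ha => by simp [hib (hα a ha)]

theorem mixrevNet_POST_inl (hbar : ∀ a ∈ N₁.T, bar a ∉ N₁.T) (hib : Set.LeftInvOn ib bar N₁.T)
    (hα : ∀ a ∈ α, a ∈ N₁.T) (hβ : ∀ b ∈ β, b ∈ N₁.T) (q : P₁) :
    (mixrevNet N₁ N₂ bar ib M₀).POST (α.map bar + β) (.inl q) = N₁.PRE α q + N₁.POST β q := by
  simp only [PTNet.POST, mixrevNet, Sum.elim_inl]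
  rw [sum_map_ite_add _ _ (by simpa using fun a ha => hbar a (hα a ha)) hβ, Multiset.map_map]
  congr 2
  exact Multiset.map_congr rfl fun a ha => by simp [hib (hα a ha)]

theorem mixrevNet_PRE_inr (hbar : ∀ a ∈ N₁.T, bar a ∉ N₁.T) (hα : ∀ a ∈ α, a ∈ N₁.T)
    (hβ : ∀ b ∈ β, b ∈ N₁.T) (p : P₂) :
    (mixrevNet N₁ N₂ bar ib M₀).PRE (α.map bar + β) (.inr p) =
      N₂.POST (β.map bar) p + N₂.PRE (α.map bar) p := by
  simp only [PTNet.PRE, mixrevNet, Sum.elim_inr]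
  rw [sum_map_ite_add _ _ (by simpa using fun a ha => hbar a (hα a ha)) hβ, add_comm]
  simp [PTNet.POST, Multiset.map_map]

theorem mixrevNet_POST_inr (hbar : ∀ a ∈ N₁.T, bar a ∉ N₁.T) (hα : ∀ a ∈ α, a ∈ N₁.T)
    (hβ : ∀ b ∈ β, b ∈ N₁.T) (p : P₂) :
    (mixrevNet N₁ N₂ bar ib M₀).POST (α.map bar + β) (.inr p) =
      N₂.PRE (β.map bar) p + N₂.POST (α.map bar) p := by
  simp only [PTNet.POST, mixrevNet, Sum.elim_inr]
  rw [sum_map_ite_add _ _ (by simpa using fun a ha => hbar a (hα a ha)) hβ, add_comm]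
  simp [PTNet.PRE, Multiset.map_map]

end Arcs

open STS

variable {X : STS S A} {bar ib : A → A} {N₁ : PTNet P₁ A} {N₂ : PTNet P₂ A}
  {μ₁ : S → P₁ → ℕ} {μ₂ : S → P₂ → ℕ} (M₀ : P₁ ⊕ P₂ → ℕ)

theorem mixrevNet_fires (hlab : X.LabelsIn) (hCE : X.CE) (hSEQ : X.SEQ)
    (hdisj : ∀ a ∈ X.T, bar a ∉ X.T) (hib : Set.LeftInvOn ib bar X.T)
    (h₁ : IsSolution X N₁ μ₁) (h₂ : IsFiringMap (X.reversed bar) N₂ μ₂) {u v : S}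
    {γ : Multiset A} (huv : (X.mixrevSTS bar).tr u γ v) :
    (mixrevNet N₁ N₂ bar ib M₀).Enabled (Sum.elim (μ₁ u) (μ₂ u)) γ ∧
      Sum.elim (μ₁ v) (μ₂ v) = (mixrevNet N₁ N₂ bar ib M₀).fire (Sum.elim (μ₁ u) (μ₂ u)) γ := by
  obtain ⟨s, α, β, rfl, ⟨w, hw⟩, hsu, hsv⟩ := huv
  have hT₁ := h₁.T_eq
  have hbar : ∀ a ∈ N₁.T, bar a ∉ N₁.T := hT₁ ▸ hdisj
  have hα : ∀ a ∈ α, a ∈ N₁.T := hT₁ ▸ hlab _ _ _ hsu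
  have hβ : ∀ b ∈ β, b ∈ N₁.T := hT₁ ▸ hlab _ _ _ hsv
  rw [hT₁] at hib
  obtain ⟨hen₁, -⟩ := h₁.fires hw
  obtain ⟨hα₁, hu₁⟩ := h₁.fires hsu
  obtain ⟨hβ₁, hv₁⟩ := h₁.fires hsv
  have hw' : X.tr s (β + α) w := add_comm α β ▸ hw
  have hws : (X.reversed bar).tr w (β.map bar + α.map bar) s := ⟨β + α, by simp, hw'⟩
  obtain ⟨hen₂, -⟩ := h₂.fires hws
  obtain ⟨hβ₂, hu₂⟩ := h₂.fires (s := w) ⟨β, rfl, hCE.tr_of_tr_add hSEQ hw hsu⟩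
  obtain ⟨-, hv₂⟩ := h₂.fires (s := w) ⟨α, rfl, hCE.tr_of_tr_add hSEQ hw' hsv⟩
  refine ⟨⟨fun c hc => ?_, ?_⟩, funext ?_⟩
  · rcases Multiset.mem_add.1 hc with hc | hc
    · exact Finset.mem_union_right _ (hen₂.1 c (Multiset.mem_add.2 (.inr hc)))
    · exact Finset.mem_union_left _ (hβ₁.1 c hc)
  · rintro (q | p)
    · rw [mixrevNet_PRE_inl M₀ hbar hib hα hβ q]
      exact hu₁ ▸ (N₁.post_add_pre_le_fire_iff (hα₁.2 q)).2 (hen₁.2 q)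
    · rw [mixrevNet_PRE_inr M₀ hbar hα hβ p]
      exact hu₂ ▸ (N₂.post_add_pre_le_fire_iff (hβ₂.2 p)).2 (hen₂.2 p)
  · rintro (q | p)
    · change μ₁ v q = μ₁ u q - _ + _
      rw [mixrevNet_PRE_inl M₀ hbar hib hα hβ q, mixrevNet_POST_inl M₀ hbar hib hα hβ q, hu₁,
        hv₁]
      exact N₁.fire_eq_fire_sub_add (hen₁.2 q)
    · change μ₂ v p = μ₂ u p - _ + _
      rw [mixrevNet_PRE_inr M₀ hbar hα hβ p, mixrevNet_POST_inr M₀ hbar hα hβ p, hu₂, hv₂]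
      exact N₂.fire_eq_fire_sub_add (hen₂.2 p)

theorem exists_mixrevSTS_tr_of_enabled (hlab : X.LabelsIn) (hSEQ : X.SEQ)
    (hdisj : ∀ a ∈ X.T, bar a ∉ X.T) (hib : Set.LeftInvOn ib bar X.T) (h₁ : IsSolution X N₁ μ₁)
    (hT₂ : N₂.T = X.T.image bar)
    (h₂ : IsFiringMap (X.reversed bar) N₂ μ₂) {u : S} {γ : Multiset A}
    (hen : (mixrevNet N₁ N₂ bar ib M₀).Enabled (Sum.elim (μ₁ u) (μ₂ u)) γ) :
    ∃ v, (X.mixrevSTS bar).tr u γ v := by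
  have hT₁ := h₁.T_eq
  have hbar : ∀ a ∈ N₁.T, bar a ∉ N₁.T := hT₁ ▸ hdisj
  rw [hT₁] at hib
  obtain ⟨α, β, hα, hβ, rfl⟩ := exists_eq_map_add_of_mem_union hib fun c hc => by
    have : c ∈ N₁.T ∪ N₂.T := hen.1 c hc
    rwa [hT₂, hT₁] at this
  have hen₂ : N₂.Enabled (μ₂ u) (α.map bar) := by
    refine ⟨fun c hc => ?_, fun p => ?_⟩
    · obtain ⟨a, ha, rfl⟩ := Multiset.mem_map.1 hc
      exact hT₂ ▸ Finset.mem_image_of_mem bar (hT₁ ▸ hα a ha)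
    · have := hen.2 (.inr p)
      rw [mixrevNet_PRE_inr M₀ hbar hα hβ p] at this
      exact le_add_self.trans this
  obtain ⟨s, α', hαα', hsu⟩ := h₂.exists_tr hen₂
  have hα' : ∀ a ∈ α', a ∈ N₁.T := hT₁ ▸ hlab _ _ _ hsu
  rw [hαα'] at hen ⊢
  obtain ⟨hα₁, hu₁⟩ := h₁.fires hsu
  have hen₁ : N₁.Enabled (μ₁ s) (α' + β) := by
    refine ⟨fun a ha => (Multiset.mem_add.1 ha).elim (hα' a) (hβ a), fun q => ?_⟩
    have := hen.2 (.inl q)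
    rw [mixrevNet_PRE_inl M₀ hbar hib hα' hβ q] at this
    exact (N₁.post_add_pre_le_fire_iff (hα₁.2 q)).1 (hu₁ ▸ this)
  obtain ⟨w, hw⟩ := h₁.exists_tr hen₁
  obtain ⟨v, hv, -⟩ := hSEQ s β α' ⟨w, add_comm α' β ▸ hw⟩
  exact ⟨v, s, α', β, rfl, ⟨w, hw⟩, hsu, hv⟩

theorem isSolution_mixrevNet (hlab : X.LabelsIn) (hCE : X.CE) (hSEQ : X.SEQ)
    (hdisj : ∀ a ∈ X.T, bar a ∉ X.T) (hib : Set.LeftInvOn ib bar X.T) (h₁ : IsSolution X N₁ μ₁)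
    (hT₂ : N₂.T = X.T.image bar)
    (h₂ : IsFiringMap (X.reversed bar) N₂ μ₂) :
    IsSolution (X.mixrevSTS bar) (mixrevNet N₁ N₂ bar ib (Sum.elim (μ₁ X.init) (μ₂ X.init)))
      fun s => Sum.elim (μ₁ s) (μ₂ s) where
  fires := mixrevNet_fires _ hlab hCE hSEQ hdisj hib h₁ h₂
  exists_tr := exists_mixrevSTS_tr_of_enabled _ hlab hSEQ hdisj hib h₁ hT₂ h₂
  injective _ _ h := h₁.injective (funext fun q => congrFun h (.inl q))
  map_init := rfl
  T_eq := by
    change X.T ∪ X.T.image bar = N₁.T ∪ N₂.T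
    rw [hT₂, h₁.T_eq]

end MixrevNet

/-- `TS^mixrev` is solvable iff both `TS` and the reversed system `TS̄` (with
multiple initial states given by a home cover `R`) are solvable. -/
theorem stmt12 {S A : Type*} [DecidableEq A] (X : STS S A) (bar : A → A)
    (hX : X.IsCEST) (hg : X.GoodRev bar)
    (R : Set S) (hR : ∀ s, ∃ r ∈ R, X.ReachFrom s r) :
    STSSolvable (X.mixrevSTS bar) ↔
      (STSSolvable X ∧ RevMultiSolvable X bar R) := by
  obtain ⟨hlab, hCE, hREA, hEL, hSEQ⟩ := hX
  constructor
  · intro h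
    obtain ⟨n, N, μ, hsol⟩ := h.exists_isSolution
    obtain ⟨hT, hF⟩ := hsol.reversed_of_mixrevSTS hlab hCE hEL hg.2
    exact ⟨(hsol.restrict_of_mixrevSTS hlab hCE hEL hg.2).stsSolvable hREA,
      revMultiSolvable_of_isFiringMap hT hF hsol.injective R⟩
  · rintro ⟨h₁, h₂⟩
    obtain ⟨n₁, N₁, μ₁, hsol₁⟩ := h₁.exists_isSolution
    obtain ⟨n₂, N₂, μ₂, hT₂, hF₂⟩ := h₂.exists_isFiringMap hR
    obtain ⟨ib, hib⟩ := exists_leftInvOn_of_injOn hg.1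
    exact (isSolution_mixrevNet hlab hCE hSEQ hg.2 hib hsol₁ hT₂ hF₂).stsSolvable
      (STS.mixrevSTS_REA hREA hEL)
end
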